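/- arXiv:2108.06627 — 7 statements merged into one kernel-verified Lean document; each statement's English description precedes it below -/
import Mathlib

section
/- Let a < b be real numbers and let u be three times continuously differentiable on [a,b]. Then for every x in [a,b], |u(x) − u_I(x) − (1/2)(x−a)(x−b)·u''(x)| ≤ ((b−a)^3/8) · sup_{t∈[a,b]} |u'''(t)|, where u_I is the linear interpolant of u on [a,b]. -/
/-!
Expand `u a` and `u b` to second order about `x`. Integrating the bound `|u'''| ≤ M` three times
bounds the Taylor remainders by `M |y - x|³ / 6`. In the interpolant the first-order terms cancel
and the second-order terms reproduce `½ (x - a)(x - b) u'' x` exactly, so the error is, up to sign,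
`((b - x) R_a + (x - a) R_b) / (b - a)`. With `s = x - a`, `t = b - x` this is at most
`M s t (s² + t²) / (6 (s + t)) ≤ M (s + t)³ / 48`.
-/

open Set

lemma abs_sub_le_of_abs_deriv_le_pow_of_le {f f' : ℝ → ℝ} {c x C : ℝ} {k : ℕ}
    (hcx : c ≤ x)
    (hf : ∀ t ∈ Icc c x, HasDerivWithinAt f (f' t) (Icc c x) t)
    (hbound : ∀ t ∈ Icc c x, |f' t| ≤ C * (t - c) ^ k) :
    |f x - f c| ≤ C * (x - c) ^ (k + 1) / (k + 1) := by
  have hB : ∀ t, HasDerivAt (fun t => C * (t - c) ^ (k + 1) / (k + 1)) (C * (t - c) ^ k) t := by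
    intro t
    refine ((((hasDerivAt_id' t).sub_const c).fun_pow (k + 1)).const_mul C
      |>.div_const ((k : ℝ) + 1)).congr_deriv ?_
    push_cast
    field_simp
  have := image_norm_le_of_norm_deriv_right_le_deriv_boundary (f := fun t => f t - f c)
    (fun t ht => (hf t ht).continuousWithinAt.sub continuousWithinAt_const)
    (fun t ht => ((hf t (Ico_subset_Icc_self ht)).sub_const (f c)).mono_of_mem_nhdsWithin
      (Icc_mem_nhdsGE_of_mem ht))
    (by simp) hB (fun t ht => hbound t (Ico_subset_Icc_self ht)) (right_mem_Icc.2 hcx)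
  simpa using this

lemma abs_sub_le_of_abs_deriv_le_pow {f f' : ℝ → ℝ} {s : Set ℝ} {c x C : ℝ} {k : ℕ}
    (hs : s.OrdConnected) (hf : ∀ t ∈ s, HasDerivWithinAt f (f' t) s t)
    (hbound : ∀ t ∈ s, |f' t| ≤ C * |t - c| ^ k) (hc : c ∈ s) (hx : x ∈ s) :
    |f x - f c| ≤ C * |x - c| ^ (k + 1) / (k + 1) := by
  rcases le_total c x with hcx | hxc
  · have hsub : Icc c x ⊆ s := hs.out hc hx
    rw [abs_of_nonneg (sub_nonneg.2 hcx)]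
    refine abs_sub_le_of_abs_deriv_le_pow_of_le hcx
      (fun t ht => (hf t (hsub ht)).mono hsub) fun t ht => ?_
    simpa [abs_of_nonneg (sub_nonneg.2 ht.1)] using hbound t (hsub ht)
  · -- reflect `[x, c]` onto `[-c, -x]`
    have hsub : Icc x c ⊆ s := hs.out hx hc
    have hmaps : MapsTo Neg.neg (Icc (-c) (-x)) (Icc x c) := fun t ht =>
      ⟨le_neg_of_le_neg ht.2, neg_le.1 ht.1⟩
    have := abs_sub_le_of_abs_deriv_le_pow_of_le (f := f ∘ Neg.neg) (f' := fun t => -f' (-t))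
      (C := C) (k := k) (neg_le_neg hxc) (fun t ht => ?_) (fun t ht => ?_)
    · rw [abs_of_nonpos (sub_nonpos.2 hxc)]
      simpa [sub_eq_add_neg, add_comm] using this
    · simpa using ((hf (-t) (hsub (hmaps ht))).mono hsub).comp t (hasDerivWithinAt_neg t _) hmaps
    · have hdist : |-t - c| = t - -c := by
        rw [abs_of_nonpos (by linarith [ht.1])]
        ring
      rw [abs_neg, ← hdist]
      exact hbound (-t) (hsub (hmaps ht))

lemma abs_taylor_two_remainder_le {u u' u'' u''' : ℝ → ℝ} {s : Set ℝ} {c x M : ℝ}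
    (hs : s.OrdConnected)
    (hu' : ∀ t ∈ s, HasDerivWithinAt u (u' t) s t)
    (hu'' : ∀ t ∈ s, HasDerivWithinAt u' (u'' t) s t)
    (hu''' : ∀ t ∈ s, HasDerivWithinAt u'' (u''' t) s t)
    (hM : ∀ t ∈ s, |u''' t| ≤ M) (hc : c ∈ s) (hx : x ∈ s) :
    |u x - u c - u' c * (x - c) - u'' c * (x - c) ^ 2 / 2| ≤ M * |x - c| ^ 3 / 6 := by
  have h₂ : ∀ t ∈ s, |u'' t - u'' c| ≤ M * |t - c| ^ 1 := fun t ht => by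
    simpa using abs_sub_le_of_abs_deriv_le_pow (k := 0) hs hu''' (by simpa using hM) hc ht
  have h₁ : ∀ t ∈ s, |(u' t - u'' c * (t - c)) - (u' c - u'' c * (c - c))| ≤
      M / 2 * |t - c| ^ 2 := fun t ht => by
    have := abs_sub_le_of_abs_deriv_le_pow (f := fun t => u' t - u'' c * (t - c)) (k := 1) hs
      (fun t ht => ((hu'' t ht).sub
        (((hasDerivWithinAt_id t s).sub_const c).const_mul _)).congr_deriv (by simp)) h₂ hc ht
    convert this using 1
    push_cast
    ring
  have h₀ := abs_sub_le_of_abs_deriv_le_pow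
    (f := fun t => u t - u' c * (t - c) - u'' c * (t - c) ^ 2 / 2) (k := 2) hs
    (fun t ht => (((hu' t ht).sub (((hasDerivWithinAt_id t s).sub_const c).const_mul _)).sub
      ((((hasDerivWithinAt_id t s).sub_const c).fun_pow 2).const_mul (u'' c)
        |>.div_const 2)).congr_deriv (by simp; ring)) h₁ hc hx
  convert h₀ using 1
  · congr 1
    ring
  · push_cast
    ring

lemma abs_interp_error_le_of_taylor {u u' u'' : ℝ → ℝ} {a b x M : ℝ} (hab : a < b)
    (hx : x ∈ Icc a b) (hM : 0 ≤ M)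
    (hRa : |u a - u x - u' x * (a - x) - u'' x * (a - x) ^ 2 / 2| ≤ M * |a - x| ^ 3 / 6)
    (hRb : |u b - u x - u' x * (b - x) - u'' x * (b - x) ^ 2 / 2| ≤ M * |b - x| ^ 3 / 6) :
    |u x - (u a * (b - x) / (b - a) + u b * (x - a) / (b - a))
        - 1 / 2 * (x - a) * (x - b) * u'' x| ≤ M * (b - a) ^ 3 / 48 := by
  set Ra := u a - u x - u' x * (a - x) - u'' x * (a - x) ^ 2 / 2
  set Rb := u b - u x - u' x * (b - x) - u'' x * (b - x) ^ 2 / 2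
  have hs : 0 ≤ x - a := sub_nonneg.2 hx.1
  have ht : 0 ≤ b - x := sub_nonneg.2 hx.2
  have hba : 0 < b - a := sub_pos.2 hab
  rw [abs_sub_comm a x, abs_of_nonneg hs] at hRa
  rw [abs_of_nonneg ht] at hRb
  have herr : u x - (u a * (b - x) / (b - a) + u b * (x - a) / (b - a))
      - 1 / 2 * (x - a) * (x - b) * u'' x = -((b - x) * Ra + (x - a) * Rb) / (b - a) := by
    field_simp
    ring
  -- `(s + t)⁴ - 8 s t (s² + t²) = (s - t)⁴`
  have hquartic : (x - a) * (b - x) * ((x - a) ^ 2 + (b - x) ^ 2) ≤ (b - a) ^ 4 / 8 := by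
    nlinarith [pow_nonneg (sq_nonneg ((x - a) - (b - x))) 2]
  rw [herr, abs_div, abs_neg, abs_of_pos hba, div_le_iff₀ hba]
  calc |(b - x) * Ra + (x - a) * Rb|
      ≤ (b - x) * (M * (x - a) ^ 3 / 6) + (x - a) * (M * (b - x) ^ 3 / 6) := by
        refine (abs_add_le _ _).trans ?_
        rw [abs_mul, abs_mul, abs_of_nonneg hs, abs_of_nonneg ht]
        gcongr
    _ = M / 6 * ((x - a) * (b - x) * ((x - a) ^ 2 + (b - x) ^ 2)) := by ring
    _ ≤ M / 6 * ((b - a) ^ 4 / 8) := by gcongr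
    _ = M * (b - a) ^ 3 / 48 * (b - a) := by ring

lemma abs_le_iSup_abs_of_continuousOn {X : Type*} [TopologicalSpace X] {g : X → ℝ} {s : Set X}
    (hs : IsCompact s) (hg : ContinuousOn g s) {t : X} (ht : t ∈ s) :
    |g t| ≤ ⨆ y : s, |g y| :=
  le_ciSup (f := fun y : s => |g y|) (by simpa only [image_eq_range] using hs.bddAbove_image hg.abs)
    ⟨t, ht⟩

/-- Let `a < b` and let `u` be three times continuously differentiable on
`[a,b]` (with derivatives `u'`, `u''`, `u'''`).  Then for every `x ∈ [a,b]`,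
`|u x − u_I x − (1/2)(x−a)(x−b) u'' x| ≤ ((b−a)³/8) · sup_{t∈[a,b]} |u''' t|`,
where `u_I` is the linear interpolant of `u` on `[a,b]`. -/
theorem linear_interp_third_order_expansion
    (a b : ℝ) (hab : a < b) (u u' u'' u''' : ℝ → ℝ)
    (hu' : ∀ x ∈ Set.Icc a b, HasDerivWithinAt u (u' x) (Set.Icc a b) x)
    (hu'' : ∀ x ∈ Set.Icc a b, HasDerivWithinAt u' (u'' x) (Set.Icc a b) x)
    (hu''' : ∀ x ∈ Set.Icc a b, HasDerivWithinAt u'' (u''' x) (Set.Icc a b) x)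
    (hcont : ContinuousOn u''' (Set.Icc a b)) :
    ∀ x ∈ Set.Icc a b,
      |u x - (u a * (b - x) / (b - a) + u b * (x - a) / (b - a))
          - 1 / 2 * (x - a) * (x - b) * u'' x|
        ≤ (b - a) ^ 3 / 8 * ⨆ t : Set.Icc a b, |u''' t| := by
  intro x hx
  set M := ⨆ t : Set.Icc a b, |u''' t|
  have hM : ∀ t ∈ Icc a b, |u''' t| ≤ M := fun t ht =>
    abs_le_iSup_abs_of_continuousOn isCompact_Icc hcont ht
  have hM0 : 0 ≤ M := (abs_nonneg _).trans (hM a (left_mem_Icc.2 hab.le))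
  have htaylor : ∀ y ∈ Icc a b,
      |u y - u x - u' x * (y - x) - u'' x * (y - x) ^ 2 / 2| ≤ M * |y - x| ^ 3 / 6 :=
    fun y hy => abs_taylor_two_remainder_le ordConnected_Icc hu' hu'' hu''' hM hx hy
  calc _ ≤ M * (b - a) ^ 3 / 48 := abs_interp_error_le_of_taylor hab hx hM0
        (htaylor a (left_mem_Icc.2 hab.le)) (htaylor b (right_mem_Icc.2 hab.le))
    _ ≤ (b - a) ^ 3 / 8 * M := by
        have := pow_pos (sub_pos.2 hab) 3
        nlinarith
end

section
/- Let a < b be real numbers and let u be three times continuously differentiable on [a,b]. Then for every x in [a,b], |(u(b)−u(a))/(b−a) − u'(x) − ((a+b−2x)/2)·u''(x)| ≤ ((b−a)^2/6) · sup_{t∈[a,b]} |u'''(t)|. -/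
/-!
Expand `u` to second order around `x` at both endpoints: with `E_c` the Taylor remainder at `c`,
`(u b - u a)/(b - a) - u' x - (a + b - 2x)/2 · u'' x = (E_b - E_a)/(b - a)`.
Integrating `|u'''| ≤ M` three times outward from `x` gives `|E_c| ≤ M |c - x|³/6`, and
`(b - x)³ + (x - a)³ ≤ (b - a)³`.
-/

open Set

lemma abs_sub_le_sub_of_abs_deriv_le {g g' B B' : ℝ → ℝ} {s t : ℝ} (hst : s ≤ t)
    (hg : ∀ r ∈ Icc s t, HasDerivWithinAt g (g' r) (Icc s t) r)
    (hB : ∀ r, HasDerivAt B (B' r) r) (hbound : ∀ r ∈ Ico s t, |g' r| ≤ B' r) :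
    |g t - g s| ≤ B t - B s := by
  have hg_right : ∀ r ∈ Ico s t, HasDerivWithinAt (fun r => g r - g s) (g' r) (Ici r) r :=
    fun r hr => ((hg r (Ico_subset_Icc_self hr)).mono_of_mem_nhdsWithin
      (Icc_mem_nhdsGE_of_mem hr)).sub_const _
  have hg_cont : ContinuousOn (fun r => g r - g s) (Icc s t) :=
    fun r hr => (hg r hr).continuousWithinAt.sub continuousWithinAt_const
  exact image_norm_le_of_norm_deriv_right_le_deriv_boundary hg_cont hg_right
    (B := fun r => B r - B s) (by simp) (fun r => (hB r).sub_const _) hbound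
    (right_mem_Icc.2 hst)

lemma abs_sub_le_of_abs_deriv_le_mul_pow {g g' : ℝ → ℝ} {a b x C : ℝ} (n : ℕ)
    (hg : ∀ t ∈ Icc a b, HasDerivWithinAt g (g' t) (Icc a b) t) (hx : x ∈ Icc a b)
    (hbound : ∀ t ∈ Icc a b, |g' t| ≤ C * |t - x| ^ n) :
    ∀ t ∈ Icc a b, |g t - g x| ≤ C * |t - x| ^ (n + 1) / (n + 1) := by
  intro t ht
  rcases le_total x t with hxt | htx
  · have hsub : Icc x t ⊆ Icc a b := Icc_subset_Icc hx.1 ht.2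
    have hB : ∀ r, HasDerivAt (fun r => C * (r - x) ^ (n + 1) / (n + 1)) (C * (r - x) ^ n) r := by
      intro r
      refine (((((hasDerivAt_id r).sub_const x).pow (n + 1)).const_mul C).div_const
        ((n : ℝ) + 1)).congr_deriv ?_
      simp only [id_eq, Nat.cast_add, Nat.cast_one, add_tsub_cancel_right, mul_one]
      field_simp
    have := abs_sub_le_sub_of_abs_deriv_le hxt (fun r hr => (hg r (hsub hr)).mono hsub) hB
      fun r hr => (hbound r (hsub (Ico_subset_Icc_self hr))).trans_eq
        (by rw [abs_of_nonneg (sub_nonneg.2 hr.1)])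
    simpa [abs_of_nonneg (sub_nonneg.2 hxt)] using this
  · have hsub : Icc t x ⊆ Icc a b := Icc_subset_Icc ht.1 hx.2
    have hB : ∀ r, HasDerivAt (fun r => -(C * (x - r) ^ (n + 1) / (n + 1))) (C * (x - r) ^ n) r := by
      intro r
      refine ((((((hasDerivAt_id r).const_sub x).pow (n + 1)).const_mul C).div_const
        ((n : ℝ) + 1)).neg).congr_deriv ?_
      simp only [id_eq, Nat.cast_add, Nat.cast_one, add_tsub_cancel_right]
      field_simp
    have := abs_sub_le_sub_of_abs_deriv_le htx (fun r hr => (hg r (hsub hr)).mono hsub) hB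
      fun r hr => (hbound r (hsub (Ico_subset_Icc_self hr))).trans_eq
        (by rw [abs_sub_comm, abs_of_nonneg (sub_nonneg.2 hr.2.le)])
    rw [abs_sub_comm, abs_sub_comm t, abs_of_nonneg (sub_nonneg.2 htx)]
    simpa using this

lemma abs_taylor_two_remainder_le_s1 {f f' f'' f''' : ℝ → ℝ} {a b M x : ℝ}
    (hf' : ∀ t ∈ Icc a b, HasDerivWithinAt f (f' t) (Icc a b) t)
    (hf'' : ∀ t ∈ Icc a b, HasDerivWithinAt f' (f'' t) (Icc a b) t)
    (hf''' : ∀ t ∈ Icc a b, HasDerivWithinAt f'' (f''' t) (Icc a b) t)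
    (hM : ∀ t ∈ Icc a b, |f''' t| ≤ M) (hx : x ∈ Icc a b) :
    ∀ c ∈ Icc a b,
      |f c - f x - f' x * (c - x) - f'' x * (c - x) ^ 2 / 2| ≤ M * |c - x| ^ 3 / 6 := by
  have hid : ∀ t, HasDerivWithinAt (fun t => t - x) 1 (Icc a b) t :=
    fun t => (hasDerivWithinAt_id t _).sub_const x
  have h0 : ∀ t ∈ Icc a b, |f'' t - f'' x| ≤ M * |t - x| := by
    simpa using abs_sub_le_of_abs_deriv_le_mul_pow 0 hf''' hx (by simpa using hM)
  have h1 : ∀ t ∈ Icc a b, |f' t - f' x - f'' x * (t - x)| ≤ M * |t - x| ^ 2 / 2 := by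
    have := abs_sub_le_of_abs_deriv_le_mul_pow (C := M) 1
      (g := fun t => f' t - f'' x * (t - x)) (g' := fun t => f'' t - f'' x)
      (fun t ht => ((hf'' t ht).sub ((hid t).const_mul (f'' x))).congr_deriv (by ring))
      hx (by simpa using h0)
    simpa [sub_right_comm, one_add_one_eq_two] using this
  have h2 := abs_sub_le_of_abs_deriv_le_mul_pow (C := M / 2) 2
    (g := fun t => f t - f' x * (t - x) - f'' x * (t - x) ^ 2 / 2)
    (g' := fun t => f' t - f' x - f'' x * (t - x))
    (fun t ht => (((hf' t ht).sub ((hid t).const_mul (f' x))).sub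
      ((((hid t).pow 2).const_mul (f'' x)).div_const 2)).congr_deriv (by ring))
    hx (fun t ht => (h1 t ht).trans_eq (by ring))
  intro c hc
  convert h2 c hc using 1 <;> norm_num <;> ring_nf

/-- Let `a < b` and let `u` be three times continuously differentiable on
`[a,b]` (with derivatives `u'`, `u''`, `u'''`).  Then for every `x ∈ [a,b]`,
`|(u b − u a)/(b−a) − u' x − ((a+b−2x)/2) u'' x| ≤ ((b−a)²/6) · sup_{t∈[a,b]} |u''' t|`. -/
theorem linear_interp_derivative_expansion
    (a b : ℝ) (hab : a < b) (u u' u'' u''' : ℝ → ℝ)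
    (hu' : ∀ x ∈ Set.Icc a b, HasDerivWithinAt u (u' x) (Set.Icc a b) x)
    (hu'' : ∀ x ∈ Set.Icc a b, HasDerivWithinAt u' (u'' x) (Set.Icc a b) x)
    (hu''' : ∀ x ∈ Set.Icc a b, HasDerivWithinAt u'' (u''' x) (Set.Icc a b) x)
    (hcont : ContinuousOn u''' (Set.Icc a b)) :
    ∀ x ∈ Set.Icc a b,
      |(u b - u a) / (b - a) - u' x - (a + b - 2 * x) / 2 * u'' x|
        ≤ (b - a) ^ 2 / 6 * ⨆ t : Set.Icc a b, |u''' t| := by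
  intro x hx
  set M := ⨆ t : Icc a b, |u''' t|
  have hbdd : BddAbove (range fun t : Icc a b => |u''' t|) := by
    simpa [image_eq_range] using isCompact_Icc.bddAbove_image hcont.abs
  have hM : ∀ t ∈ Icc a b, |u''' t| ≤ M := fun t ht => le_ciSup hbdd ⟨t, ht⟩
  have hba : 0 < b - a := sub_pos.2 hab
  have hEb := abs_taylor_two_remainder_le_s1 hu' hu'' hu''' hM hx b (right_mem_Icc.2 hab.le)
  have hEa := abs_taylor_two_remainder_le_s1 hu' hu'' hu''' hM hx a (left_mem_Icc.2 hab.le)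
  rw [abs_of_nonneg (sub_nonneg.2 hx.2)] at hEb
  rw [abs_sub_comm a, abs_of_nonneg (sub_nonneg.2 hx.1)] at hEa
  have hcubes : (b - x) ^ 3 + (x - a) ^ 3 ≤ (b - a) ^ 3 := by
    simpa using pow_add_pow_le (sub_nonneg.2 hx.2) (sub_nonneg.2 hx.1) three_ne_zero
  have hM0 : 0 ≤ M := (abs_nonneg _).trans (hM x hx)
  calc |(u b - u a) / (b - a) - u' x - (a + b - 2 * x) / 2 * u'' x|
      = |((u b - u x - u' x * (b - x) - u'' x * (b - x) ^ 2 / 2)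
          - (u a - u x - u' x * (a - x) - u'' x * (a - x) ^ 2 / 2)) / (b - a)| := by
        congr 1
        field_simp
        ring
    _ ≤ (M * (b - x) ^ 3 / 6 + M * (x - a) ^ 3 / 6) / (b - a) := by
        rw [abs_div, abs_of_pos hba]
        gcongr
        exact (abs_sub _ _).trans (add_le_add hEb hEa)
    _ ≤ M * (b - a) ^ 3 / 6 / (b - a) := by gcongr; linarith [mul_le_mul_of_nonneg_left hcubes hM0]
    _ = (b - a) ^ 2 / 6 * M := by field_simp
end

section
/- Let a < b, let β > 0 be a real constant, let f be continuously differentiable on [a,b], and let u be twice continuously differentiable on [a,b] with β·u''(x) = −f(x) for all x in [a,b]. Then for every x in [a,b], |u(x) − u_I(x) + (1/(2β))(x−a)(x−b)·f(x)| ≤ ((b−a)^3/(8β)) · sup_{t∈[a,b]} |f'(t)|. -/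
/-!
Fix `x` and freeze the load at `f x`: the function
`h t = u t - u_I t + f x / (2β) (t - a)(t - b)` vanishes at `a` and `b`, and
`h'' t = (f x - f t) / β`, which the mean value theorem bounds by `M (b - a) / β` with
`M = sup |f'|`. A function vanishing at both ends with `|h''| ≤ K` satisfies
`|h x| ≤ K/2 (x - a)(b - x) ≤ K (b - a)² / 8`.
-/

open Set

section SecondDerivativeBound

variable {a b K : ℝ} {φ φ' φ'' : ℝ → ℝ}

/-- `φ - K/2 (t - a)(b - t)` has nonnegative second derivative, hence is convex, and it vanishes
at `a` and `b`. -/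
theorem le_of_eq_zero_of_neg_le_deriv2
    (hφ' : ∀ t ∈ Icc a b, HasDerivWithinAt φ (φ' t) (Icc a b) t)
    (hφ'' : ∀ t ∈ Icc a b, HasDerivWithinAt φ' (φ'' t) (Icc a b) t)
    (hK : ∀ t ∈ Icc a b, -K ≤ φ'' t) (ha : φ a = 0) (hb : φ b = 0)
    {x : ℝ} (hx : x ∈ Icc a b) : φ x ≤ K / 2 * ((x - a) * (b - x)) := by
  set ψ : ℝ → ℝ := fun t => φ t - K / 2 * ((t - a) * (b - t))
  have hq' (t : ℝ) :
      HasDerivAt (fun t => K / 2 * ((t - a) * (b - t))) (K / 2 * (a + b - 2 * t)) t :=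
    ((((hasDerivAt_id' t).sub_const a).mul ((hasDerivAt_id' t).const_sub b)).const_mul
      (K / 2)).congr_deriv (by ring)
  have hq'' (t : ℝ) : HasDerivAt (fun t => K / 2 * (a + b - 2 * t)) (-K) t :=
    ((((hasDerivAt_id' t).const_mul 2).const_sub (a + b)).const_mul (K / 2)).congr_deriv
      (by ring)
  have hψ_convex : ConvexOn ℝ (Icc a b) ψ := by
    refine convexOn_of_hasDerivWithinAt2_nonneg (convex_Icc a b)
      (fun t ht => (hφ' t ht).continuousWithinAt.sub (by fun_prop))
      (f' := fun t => φ' t - K / 2 * (a + b - 2 * t)) (f'' := fun t => φ'' t + K)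
      (fun t ht => ?_) (fun t ht => ?_) (fun t ht => ?_)
    · rw [interior_Icc] at ht ⊢
      exact ((hφ' t (Ioo_subset_Icc_self ht)).mono Ioo_subset_Icc_self).sub
        (hq' t).hasDerivWithinAt
    · rw [interior_Icc] at ht ⊢
      exact (((hφ'' t (Ioo_subset_Icc_self ht)).mono Ioo_subset_Icc_self).sub
        (hq'' t).hasDerivWithinAt).congr_deriv (sub_neg_eq_add _ _)
    · rw [interior_Icc] at ht
      linarith [hK t (Ioo_subset_Icc_self ht)]
  have hab : a ≤ b := hx.1.trans hx.2
  simpa [ψ, ha, hb] using hψ_convex.le_on_segment (left_mem_Icc.2 hab) (right_mem_Icc.2 hab)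
    ((segment_eq_Icc hab).symm ▸ hx)

theorem abs_le_of_eq_zero_of_abs_deriv2_le
    (hφ' : ∀ t ∈ Icc a b, HasDerivWithinAt φ (φ' t) (Icc a b) t)
    (hφ'' : ∀ t ∈ Icc a b, HasDerivWithinAt φ' (φ'' t) (Icc a b) t)
    (hK : ∀ t ∈ Icc a b, |φ'' t| ≤ K) (ha : φ a = 0) (hb : φ b = 0)
    {x : ℝ} (hx : x ∈ Icc a b) : |φ x| ≤ K / 2 * ((x - a) * (b - x)) := by
  have hupper := le_of_eq_zero_of_neg_le_deriv2 hφ' hφ''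
    (fun t ht => (abs_le.1 (hK t ht)).1) ha hb hx
  have hlower := le_of_eq_zero_of_neg_le_deriv2 (φ := -φ) (fun t ht => (hφ' t ht).neg)
    (fun t ht => (hφ'' t ht).neg) (fun t ht => by simpa using (abs_le.1 (hK t ht)).2)
    (by simp [ha]) (by simp [hb]) hx
  rw [Pi.neg_apply] at hlower
  exact abs_le.2 ⟨by linarith, hupper⟩

end SecondDerivativeBound

noncomputable def linInterp (a b : ℝ) (u : ℝ → ℝ) (x : ℝ) : ℝ :=
  u a * (b - x) / (b - a) + u b * (x - a) / (b - a)

section LinInterp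

variable {a b : ℝ} {u : ℝ → ℝ}

theorem linInterp_left (hab : a ≠ b) : linInterp a b u a = u a := by
  rw [linInterp, sub_self, mul_zero, zero_div, add_zero,
    mul_div_cancel_right₀ _ (sub_ne_zero.2 hab.symm)]

theorem linInterp_right (hab : a ≠ b) : linInterp a b u b = u b := by
  rw [linInterp, sub_self, mul_zero, zero_div, zero_add,
    mul_div_cancel_right₀ _ (sub_ne_zero.2 hab.symm)]

theorem hasDerivAt_linInterp (x : ℝ) :
    HasDerivAt (linInterp a b u) ((u b - u a) / (b - a)) x :=
  ((((hasDerivAt_id' x).const_sub b).const_mul (u a)).div_const (b - a)).add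
    ((((hasDerivAt_id' x).sub_const a).const_mul (u b)).div_const (b - a)) |>.congr_deriv
    (by ring)

end LinInterp

theorem abs_sub_linInterp_add_bubble_le {a b c K : ℝ} {u u' u'' : ℝ → ℝ} (hab : a ≠ b)
    (hu' : ∀ t ∈ Icc a b, HasDerivWithinAt u (u' t) (Icc a b) t)
    (hu'' : ∀ t ∈ Icc a b, HasDerivWithinAt u' (u'' t) (Icc a b) t)
    (hK : ∀ t ∈ Icc a b, |u'' t + 2 * c| ≤ K) {x : ℝ} (hx : x ∈ Icc a b) :
    |u x - linInterp a b u x + c * ((x - a) * (x - b))| ≤ K / 2 * ((x - a) * (b - x)) := by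
  have hbubble' (t : ℝ) :
      HasDerivAt (fun t => c * ((t - a) * (t - b))) (c * (2 * t - a - b)) t :=
    ((((hasDerivAt_id' t).sub_const a).mul ((hasDerivAt_id' t).sub_const b)).const_mul
      c).congr_deriv (by ring)
  have hbubble'' (t : ℝ) : HasDerivAt (fun t => c * (2 * t - a - b)) (2 * c) t :=
    (((((hasDerivAt_id' t).const_mul 2).sub_const a).sub_const b).const_mul c).congr_deriv
      (by ring)
  refine abs_le_of_eq_zero_of_abs_deriv2_le
    (φ := fun t => u t - linInterp a b u t + c * ((t - a) * (t - b)))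
    (φ' := fun t => u' t - (u b - u a) / (b - a) + c * (2 * t - a - b))
    (fun t ht => ((hu' t ht).sub (hasDerivAt_linInterp t).hasDerivWithinAt).add
      (hbubble' t).hasDerivWithinAt)
    (fun t ht => (((hu'' t ht).sub_const _).add (hbubble'' t).hasDerivWithinAt)) hK
    (by simp [linInterp_left hab]) (by simp [linInterp_right hab]) hx

theorem posterior_corrected_interp_third_order_general
    (a b β : ℝ) (hab : a < b) (hβ : 0 < β) (f f' u u' u'' : ℝ → ℝ)
    (hf' : ∀ x ∈ Set.Icc a b, HasDerivWithinAt f (f' x) (Set.Icc a b) x)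
    (hf'c : ContinuousOn f' (Set.Icc a b))
    (hu' : ∀ x ∈ Set.Icc a b, HasDerivWithinAt u (u' x) (Set.Icc a b) x)
    (hu'' : ∀ x ∈ Set.Icc a b, HasDerivWithinAt u' (u'' x) (Set.Icc a b) x)
    (hode : ∀ x ∈ Set.Icc a b, β * u'' x = -f x) :
    ∀ x ∈ Set.Icc a b,
      |u x - (u a * (b - x) / (b - a) + u b * (x - a) / (b - a))
          + 1 / (2 * β) * (x - a) * (x - b) * f x|
        ≤ (b - a) ^ 3 / (8 * β) * ⨆ t : Set.Icc a b, |f' t| := by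
  intro x hx
  set M := ⨆ t : Icc a b, |f' t|
  have hM (t : ℝ) (ht : t ∈ Icc a b) : |f' t| ≤ M :=
    le_ciSup (by simpa [image_eq_range] using isCompact_Icc.bddAbove_image hf'c.abs)
      (⟨t, ht⟩ : Icc a b)
  have hM₀ : 0 ≤ M := (abs_nonneg _).trans (hM x hx)
  have hf_lip (t : ℝ) (ht : t ∈ Icc a b) : |f x - f t| ≤ M * (b - a) := by
    have hmvt := (convex_Icc a b).norm_image_sub_le_of_norm_hasDerivWithin_le hf' hM ht hx
    have hxt : |x - t| ≤ b - a :=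
      abs_sub_le_iff.2 ⟨by linarith [ht.1, hx.2], by linarith [hx.1, ht.2]⟩
    rw [Real.norm_eq_abs, Real.norm_eq_abs] at hmvt
    exact hmvt.trans (by gcongr)
  have hK (t : ℝ) (ht : t ∈ Icc a b) : |u'' t + 2 * (f x / (2 * β))| ≤ M * (b - a) / β := by
    have : u'' t + 2 * (f x / (2 * β)) = (f x - f t) / β := by
      field_simp; linarith [hode t ht]
    rw [this, abs_div, abs_of_pos hβ]
    exact div_le_div_of_nonneg_right (hf_lip t ht) hβ.le
  have hbubble : (x - a) * (b - x) ≤ (b - a) ^ 2 / 4 := by nlinarith [sq_nonneg (2 * x - a - b)]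
  calc _ = |u x - linInterp a b u x + f x / (2 * β) * ((x - a) * (x - b))| := by
        rw [linInterp]; ring_nf
    _ ≤ M * (b - a) / β / 2 * ((x - a) * (b - x)) :=
        abs_sub_linInterp_add_bubble_le hab.ne hu' hu'' hK hx
    _ ≤ M * (b - a) / β / 2 * ((b - a) ^ 2 / 4) := by gcongr
    _ = (b - a) ^ 3 / (8 * β) * M := by ring

/-- Let `a < b`, `β > 0` constant, `f` continuously differentiable on `[a,b]`,
and `u` twice continuously differentiable on `[a,b]` with `β u'' = −f`.  Then for every
`x ∈ [a,b]`, `|u x − u_I x + (1/(2β))(x−a)(x−b) f x| ≤ ((b−a)³/(8β)) · sup_{t∈[a,b]} |f' t|`,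
where `u_I` is the linear interpolant of `u` on `[a,b]`. -/
theorem posterior_corrected_interp_third_order
    (a b β : ℝ) (hab : a < b) (hβ : 0 < β) (f f' u u' u'' : ℝ → ℝ)
    (hf' : ∀ x ∈ Set.Icc a b, HasDerivWithinAt f (f' x) (Set.Icc a b) x)
    (hf'c : ContinuousOn f' (Set.Icc a b))
    (hu' : ∀ x ∈ Set.Icc a b, HasDerivWithinAt u (u' x) (Set.Icc a b) x)
    (hu'' : ∀ x ∈ Set.Icc a b, HasDerivWithinAt u' (u'' x) (Set.Icc a b) x)
    (hu''c : ContinuousOn u'' (Set.Icc a b))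
    (hode : ∀ x ∈ Set.Icc a b, β * u'' x = -f x) :
    ∀ x ∈ Set.Icc a b,
      |u x - (u a * (b - x) / (b - a) + u b * (x - a) / (b - a))
          + 1 / (2 * β) * (x - a) * (x - b) * f x|
        ≤ (b - a) ^ 3 / (8 * β) * ⨆ t : Set.Icc a b, |f' t| :=
  posterior_corrected_interp_third_order_general a b β hab hβ f f' u u' u'' hf' hf'c hu' hu'' hode
end

section
/- Let a < b, let β > 0 be a real constant, let f be continuously differentiable on [a,b], and let u be twice continuously differentiable on [a,b] with β·u''(x) = −f(x) for all x in [a,b]. Then for every x in [a,b], |u'(x) − ( (u(b)−u(a))/(b−a) − (1/(2β))·[(2x−a−b)·f(x) + (x−a)(x−b)·f'(x)] )| ≤ (7(b−a)^2/(24β)) · sup_{t∈[a,b]} |f'(t)|. -/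
/-!
Set `m = (a+b)/2`, `M = sup |f'|`, and let `g = u + (t-a)(t-b) f / (2β)`, whose derivative is the
quantity compared with `u'`. Since `g a = u a` and `g b = u b`, the mean value theorem gives a point
`ξ` with `g'(ξ)` equal to the difference quotient of `u`, so the error at `x` is `g'(x) - g'(ξ)`.
Split `g' = Φ + (t-a)(t-b) f' / (2β)` with `Φ = u' + (2t-a-b) f / (2β)`. The equation `β u'' = -f`
cancels the `f` terms in `Φ'`, leaving `Φ' = (2t-a-b) f' / (2β)`, which is at most `(M/β) |t-m|`;
hence `|Φ y - Φ m| ≤ M (y-m)² / (2β)`. Since `|(t-a)(t-b)| = (b-a)²/4 - (t-m)²`, the `(t-m)²`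
terms cancel and the error is at most `M (b-a)² / (4β)`.
-/

open Set

theorem IsCompact.le_ciSup_of_continuousOn {α : Type*} [TopologicalSpace α] {s : Set α}
    (hs : IsCompact s) {g : α → ℝ} (hg : ContinuousOn g s) {t : α} (ht : t ∈ s) :
    g t ≤ ⨆ x : s, g x :=
  le_ciSup (by simpa only [image_eq_range] using hs.bddAbove_image hg) (⟨t, ht⟩ : s)

section Comparison

variable {D : Set ℝ} {g g' G G' : ℝ → ℝ}

theorem abs_sub_le_sub_of_abs_hasDerivWithinAt_le (hD : Convex ℝ D)
    (hg : ∀ t ∈ D, HasDerivWithinAt g (g' t) D t) (hG : ∀ t ∈ D, HasDerivWithinAt G (G' t) D t)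
    (hbound : ∀ t ∈ D, |g' t| ≤ G' t) {x y : ℝ} (hx : x ∈ D) (hy : y ∈ D) (hxy : x ≤ y) :
    |g y - g x| ≤ G y - G x := by
  have hmono : ∀ σ : ℝ, |σ| ≤ 1 → MonotoneOn (fun t => G t + σ * g t) D := by
    intro σ hσ
    have hderiv : ∀ t ∈ D, HasDerivWithinAt (fun t => G t + σ * g t) (G' t + σ * g' t) D t :=
      fun t ht => (hG t ht).add ((hg t ht).const_mul σ)
    refine monotoneOn_of_hasDerivWithinAt_nonneg hD (fun t ht => (hderiv t ht).continuousWithinAt)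
      (fun t ht => (hderiv t (interior_subset ht)).mono interior_subset) fun t ht => ?_
    have hσg : |σ * g' t| ≤ |g' t| := by
      rw [abs_mul]
      exact mul_le_of_le_one_left (abs_nonneg _) hσ
    linarith [neg_abs_le (σ * g' t), hbound t (interior_subset ht)]
  have hplus := hmono 1 (by norm_num) hx hy hxy
  have hminus := hmono (-1) (by norm_num) hx hy hxy
  simp only [one_mul, neg_one_mul] at hplus hminus
  rw [abs_le]
  constructor <;> linarith

theorem abs_sub_le_of_abs_hasDerivWithinAt_le_mul_abs_sub (hD : Convex ℝ D)
    (hg : ∀ t ∈ D, HasDerivWithinAt g (g' t) D t) {K c : ℝ}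
    (hbound : ∀ t ∈ D, |g' t| ≤ K * |t - c|) {x : ℝ} (hc : c ∈ D) (hx : x ∈ D) :
    |g x - g c| ≤ K / 2 * (x - c) ^ 2 := by
  have hquad (σ t : ℝ) (s : Set ℝ) :
      HasDerivWithinAt (fun t => σ * (K / 2) * (t - c) ^ 2) (σ * (K * (t - c))) s t :=
    ((((hasDerivAt_id' t).sub_const c).fun_pow 2).const_mul (σ * (K / 2))).hasDerivWithinAt
      |>.congr_deriv (by ring)
  rcases le_total c x with hcx | hxc
  · have := abs_sub_le_sub_of_abs_hasDerivWithinAt_le (hD.inter (convex_Ici c))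
      (fun t ht => (hg t ht.1).mono inter_subset_left) (fun t _ => hquad 1 t _)
      (fun t ht => by simpa [abs_of_nonneg (sub_nonneg.2 (mem_Ici.1 ht.2))] using hbound t ht.1)
      ⟨hc, self_mem_Ici⟩ ⟨hx, hcx⟩ hcx
    simpa using this
  · have := abs_sub_le_sub_of_abs_hasDerivWithinAt_le (hD.inter (convex_Iic c))
      (fun t ht => (hg t ht.1).mono inter_subset_left) (fun t _ => hquad (-1) t _)
      (fun t ht => by
        have := hbound t ht.1
        rw [abs_of_nonpos (sub_nonpos.2 (mem_Iic.1 ht.2))] at this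
        linarith)
      ⟨hx, hxc⟩ ⟨hc, self_mem_Iic⟩ hxc
    rw [abs_sub_comm]
    simpa using this

end Comparison

section CorrectedInterpolant

variable {a b β M t : ℝ} {f f' u u' u'' : ℝ → ℝ}

theorem hasDerivWithinAt_flux {s : Set ℝ} (hβ : β ≠ 0) (hf : HasDerivWithinAt f (f' t) s t)
    (hu'' : HasDerivWithinAt u' (u'' t) s t) (hode : β * u'' t = -f t) :
    HasDerivWithinAt (fun t => u' t + (2 * t - a - b) * f t / (2 * β))
      ((2 * t - a - b) * f' t / (2 * β)) s t := by
  have hlin : HasDerivWithinAt (fun t : ℝ => 2 * t - a - b) 2 s t := by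
    simpa using (((hasDerivWithinAt_id t s).const_mul 2).sub_const a).sub_const b
  refine (hu''.add ((hlin.mul hf).div_const (2 * β))).congr_deriv ?_
  field_simp
  linear_combination 2 * hode

theorem exists_mem_Icc_corrected_deriv_eq_slope (hab : a < b)
    (hf : ∀ x ∈ Icc a b, HasDerivWithinAt f (f' x) (Icc a b) x)
    (hu : ∀ x ∈ Icc a b, HasDerivWithinAt u (u' x) (Icc a b) x) (β : ℝ) :
    ∃ ξ ∈ Icc a b, u' ξ + ((2 * ξ - a - b) * f ξ + (ξ - a) * (ξ - b) * f' ξ) / (2 * β)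
      = (u b - u a) / (b - a) := by
  have hg : ∀ x ∈ Icc a b, HasDerivWithinAt (fun t => u t + (t - a) * (t - b) * f t / (2 * β))
      (u' x + ((2 * x - a - b) * f x + (x - a) * (x - b) * f' x) / (2 * β)) (Icc a b) x := by
    intro x hx
    have hbubble : HasDerivWithinAt (fun t : ℝ => (t - a) * (t - b)) (2 * x - a - b) (Icc a b) x :=
      (((hasDerivWithinAt_id x _).sub_const a).mul ((hasDerivWithinAt_id x _).sub_const b))
        |>.congr_deriv (by simp only [id]; ring)
    exact (hu x hx).add (((hbubble.mul (hf x hx)).div_const (2 * β)))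
  obtain ⟨ξ, hξ, hslope⟩ := exists_hasDerivAt_eq_slope _ _ hab
    (fun x hx => (hg x hx).continuousWithinAt)
    (fun x hx => (hg x (Ioo_subset_Icc_self hx)).hasDerivAt (Icc_mem_nhds hx.1 hx.2))
  exact ⟨ξ, Ioo_subset_Icc_self hξ, by simpa using hslope⟩

theorem abs_flux_deriv_le (hβ : 0 < β) (hM : |f' t| ≤ M) :
    |(2 * t - a - b) * f' t / (2 * β)| ≤ M / β * |t - (a + b) / 2| := by
  have hlin : |2 * t - a - b| = 2 * |t - (a + b) / 2| := by
    rw [← abs_two, ← abs_mul, abs_two]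
    ring_nf
  rw [abs_div, abs_mul, hlin, abs_of_pos (by positivity : (0 : ℝ) < 2 * β)]
  calc 2 * |t - (a + b) / 2| * |f' t| / (2 * β) = |t - (a + b) / 2| * |f' t| / β := by ring
    _ ≤ |t - (a + b) / 2| * M / β := by gcongr
    _ = M / β * |t - (a + b) / 2| := by ring

theorem abs_bubble_mul_div_le (hβ : 0 < β) (ht : t ∈ Icc a b) (hM : |f' t| ≤ M) :
    |(t - a) * (t - b) * f' t / (2 * β)| ≤ M / β / 2 * ((b - a) ^ 2 / 4 - (t - (a + b) / 2) ^ 2) := by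
  have hbubble : |(t - a) * (t - b)| = (b - a) ^ 2 / 4 - (t - (a + b) / 2) ^ 2 := by
    rw [abs_of_nonpos (mul_nonpos_of_nonneg_of_nonpos (by linarith [ht.1]) (by linarith [ht.2]))]
    ring
  have hnonneg : 0 ≤ (b - a) ^ 2 / 4 - (t - (a + b) / 2) ^ 2 := hbubble ▸ abs_nonneg _
  rw [abs_div, abs_mul, hbubble, abs_of_pos (by positivity : (0 : ℝ) < 2 * β)]
  calc ((b - a) ^ 2 / 4 - (t - (a + b) / 2) ^ 2) * |f' t| / (2 * β)
      ≤ ((b - a) ^ 2 / 4 - (t - (a + b) / 2) ^ 2) * M / (2 * β) := by gcongr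
    _ = M / β / 2 * ((b - a) ^ 2 / 4 - (t - (a + b) / 2) ^ 2) := by ring

end CorrectedInterpolant

theorem posterior_corrected_interp_derivative_second_order_general
    (a b β : ℝ) (hab : a < b) (hβ : 0 < β) (f f' u u' u'' : ℝ → ℝ)
    (hf' : ∀ x ∈ Set.Icc a b, HasDerivWithinAt f (f' x) (Set.Icc a b) x)
    (hf'c : ContinuousOn f' (Set.Icc a b))
    (hu' : ∀ x ∈ Set.Icc a b, HasDerivWithinAt u (u' x) (Set.Icc a b) x)
    (hu'' : ∀ x ∈ Set.Icc a b, HasDerivWithinAt u' (u'' x) (Set.Icc a b) x)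
    (hode : ∀ x ∈ Set.Icc a b, β * u'' x = -f x) :
    ∀ x ∈ Set.Icc a b,
      |u' x - ((u b - u a) / (b - a)
          - 1 / (2 * β) * ((2 * x - a - b) * f x + (x - a) * (x - b) * f' x))|
        ≤ 7 * (b - a) ^ 2 / (24 * β) * ⨆ t : Set.Icc a b, |f' t| := by
  intro x hx
  set M := ⨆ t : Icc a b, |f' t|
  set Φ := fun t => u' t + (2 * t - a - b) * f t / (2 * β)
  have hM : ∀ t ∈ Icc a b, |f' t| ≤ M := fun t ht =>
    isCompact_Icc.le_ciSup_of_continuousOn hf'c.abs ht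
  have hM0 : 0 ≤ M / β := div_nonneg ((abs_nonneg _).trans (hM x hx)) hβ.le
  have hΦ : ∀ y ∈ Icc a b, |Φ y - Φ ((a + b) / 2)| ≤ M / β / 2 * (y - (a + b) / 2) ^ 2 := fun y hy =>
    abs_sub_le_of_abs_hasDerivWithinAt_le_mul_abs_sub (convex_Icc a b)
      (fun t ht => hasDerivWithinAt_flux hβ.ne' (hf' t ht) (hu'' t ht) (hode t ht))
      (fun t ht => abs_flux_deriv_le hβ (hM t ht)) ⟨by linarith, by linarith⟩ hy
  obtain ⟨ξ, hξ, hslope⟩ := exists_mem_Icc_corrected_deriv_eq_slope hab hf' hu' β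
  have herror : u' x - ((u b - u a) / (b - a)
      - 1 / (2 * β) * ((2 * x - a - b) * f x + (x - a) * (x - b) * f' x))
      = (Φ x - Φ ((a + b) / 2)) - (Φ ξ - Φ ((a + b) / 2)) + (x - a) * (x - b) * f' x / (2 * β)
        - (ξ - a) * (ξ - b) * f' ξ / (2 * β) := by
    rw [← hslope]
    ring
  rw [herror]
  calc _ ≤ M / β / 4 * (b - a) ^ 2 := by
        have hx₁ := abs_le.1 (hΦ x hx)
        have hξ₁ := abs_le.1 (hΦ ξ hξ)
        have hx₂ := abs_le.1 (abs_bubble_mul_div_le hβ hx (hM x hx))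
        have hξ₂ := abs_le.1 (abs_bubble_mul_div_le hβ hξ (hM ξ hξ))
        rw [abs_le]
        constructor <;> linarith
    _ ≤ 7 * (b - a) ^ 2 / (24 * β) * M := by
        have hscale : 7 * (b - a) ^ 2 / (24 * β) * M = 7 / 6 * (M / β / 4 * (b - a) ^ 2) := by
          field_simp
          ring
        linarith [mul_nonneg hM0 (sq_nonneg (b - a))]

/-- Let `a < b`, `β > 0` constant, `f` continuously differentiable on `[a,b]`,
and `u` twice continuously differentiable on `[a,b]` with `β u'' = −f`.  Then for every
`x ∈ [a,b]`,
`|u' x − ((u b − u a)/(b−a) − (1/(2β))·[(2x−a−b) f x + (x−a)(x−b) f' x])|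
  ≤ (7(b−a)²/(24β)) · sup_{t∈[a,b]} |f' t|`. -/
theorem posterior_corrected_interp_derivative_second_order
    (a b β : ℝ) (hab : a < b) (hβ : 0 < β) (f f' u u' u'' : ℝ → ℝ)
    (hf' : ∀ x ∈ Set.Icc a b, HasDerivWithinAt f (f' x) (Set.Icc a b) x)
    (hf'c : ContinuousOn f' (Set.Icc a b))
    (hu' : ∀ x ∈ Set.Icc a b, HasDerivWithinAt u (u' x) (Set.Icc a b) x)
    (hu'' : ∀ x ∈ Set.Icc a b, HasDerivWithinAt u' (u'' x) (Set.Icc a b) x)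
    (hu''c : ContinuousOn u'' (Set.Icc a b))
    (hode : ∀ x ∈ Set.Icc a b, β * u'' x = -f x) :
    ∀ x ∈ Set.Icc a b,
      |u' x - ((u b - u a) / (b - a)
          - 1 / (2 * β) * ((2 * x - a - b) * f x + (x - a) * (x - b) * f' x))|
        ≤ 7 * (b - a) ^ 2 / (24 * β) * ⨆ t : Set.Icc a b, |f' t| :=
  posterior_corrected_interp_derivative_second_order_general a b β hab hβ f f' u u' u'' hf' hf'c hu'
    hu'' hode
end

section
/- Let x_0 < x_1 < ... < x_n (n ≥ 1) be a partition, let β > 0 be a real constant, let f be continuous on [x_0, x_n], and let u be twice continuously differentiable on [x_0, x_n] with β·u''(x) = −f(x) for all x, u(x_0) = 0, and u(x_n) = 0. Suppose c_0, ..., c_n are real numbers with c_0 = c_n = 0 satisfying, for every i with 1 ≤ i ≤ n−1, β·( (c_i − c_{i−1})/(x_i − x_{i−1}) − (c_{i+1} − c_i)/(x_{i+1} − x_i) ) = ∫_{x_{i−1}}^{x_{i+1}} f(x)·φ_i(x) dx, where φ_i is the hat function at x_i. Then c_i = u(x_i) for all i. -/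
/-!
Testing `β u'' = -f` against the hat function at `x i` and integrating by parts on the two
cells of its support shows that the exact nodal values `u (x i)` satisfy the same Galerkin
equations as the `c i`. Hence the nodal error `c i - u (x i)` has equal consecutive divided
differences, so it is an affine function of `x i`; vanishing at both ends of the mesh, it is zero.
-/

/-- The hat (piecewise linear) basis function associated with the nodes `xm < xc < xp`:
it equals `(t−xm)/(xc−xm)` on `[xm,xc]`, `(xp−t)/(xp−xc)` on `[xc,xp]`, and `0` otherwise. -/
noncomputable def hatFun (xm xc xp : ℝ) (t : ℝ) : ℝ :=
  if t ∈ Set.Icc xm xc then (t - xm) / (xc - xm)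
  else if t ∈ Set.Icc xc xp then (xp - t) / (xp - xc)
  else 0

open Set intervalIntegral

section Hat

variable {a b c : ℝ}

theorem hatFun_eqOn_left : EqOn (hatFun a b c) (fun t => (t - a) / (b - a)) (Icc a b) :=
  fun _ ht => if_pos ht

theorem hatFun_eqOn_right (hab : a ≠ b) (hcb : c ≠ b) :
    EqOn (hatFun a b c) (fun t => (c - t) / (c - b)) (Icc b c) := by
  intro t ht
  by_cases hl : t ∈ Icc a b
  · obtain rfl : t = b := le_antisymm hl.2 ht.1
    simp [hatFun, hl, div_self (sub_ne_zero.2 hab.symm), div_self (sub_ne_zero.2 hcb)]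
  · simp [hatFun, hl, ht]

end Hat

section IntegrationByParts

variable {a b c : ℝ} {u u' u'' : ℝ → ℝ}

theorem integral_mul_sub_eq_of_hasDerivWithinAt (hab : a ≤ b)
    (hu : ∀ t ∈ Icc a b, HasDerivWithinAt u (u' t) (Icc a b) t)
    (hu' : ∀ t ∈ Icc a b, HasDerivWithinAt u' (u'' t) (Icc a b) t)
    (hu'' : ContinuousOn u'' (Icc a b)) (r : ℝ) :
    ∫ t in a..b, u'' t * (t - r) = (u' b * (b - r) - u b) - (u' a * (a - r) - u a) := by
  have hu'c : ContinuousOn u' (Icc a b) := fun t ht => (hu' t ht).continuousWithinAt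
  have huc : ContinuousOn u (Icc a b) := fun t ht => (hu t ht).continuousWithinAt
  refine integral_eq_sub_of_hasDerivAt_of_le (f := fun t => u' t * (t - r) - u t) hab
    (by fun_prop) (fun t ht => ?_) (ContinuousOn.intervalIntegrable_of_Icc hab (by fun_prop))
  have hnhds : Icc a b ∈ nhds t := Icc_mem_nhds ht.1 ht.2
  have h : HasDerivAt (fun t => u' t * (t - r) - u t) (u'' t * (t - r) + u' t * 1 - u' t) t :=
    (((hu' t (Ioo_subset_Icc_self ht)).hasDerivAt hnhds).mul ((hasDerivAt_id t).sub_const r)).sub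
      ((hu t (Ioo_subset_Icc_self ht)).hasDerivAt hnhds)
  simpa using h

theorem integral_mul_hatFun (hab : a < b) (hbc : b < c)
    (hu : ∀ t ∈ Icc a c, HasDerivWithinAt u (u' t) (Icc a c) t)
    (hu' : ∀ t ∈ Icc a c, HasDerivWithinAt u' (u'' t) (Icc a c) t)
    (hu'' : ContinuousOn u'' (Icc a c)) :
    ∫ t in a..c, u'' t * hatFun a b c t = (u c - u b) / (c - b) - (u b - u a) / (b - a) := by
  have hL : Icc a b ⊆ Icc a c := Icc_subset_Icc_right hbc.le
  have hR : Icc b c ⊆ Icc a c := Icc_subset_Icc_left hab.le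
  have hleft : EqOn (fun t => u'' t * hatFun a b c t) (fun t => u'' t * (t - a) / (b - a))
      (Icc a b) := fun t ht => by simp only [hatFun_eqOn_left ht]; ring
  have hright : EqOn (fun t => u'' t * hatFun a b c t) (fun t => -(u'' t * (t - c)) / (c - b))
      (Icc b c) := fun t ht => by simp only [hatFun_eqOn_right hab.ne hbc.ne' ht]; ring
  have hcL : ContinuousOn (fun t => u'' t * (t - a) / (b - a)) (Icc a b) := by
    have := hu''.mono hL; fun_prop
  have hcR : ContinuousOn (fun t => -(u'' t * (t - c)) / (c - b)) (Icc b c) := by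
    have := hu''.mono hR; fun_prop
  have hintL := (hcL.congr hleft).intervalIntegrable_of_Icc (μ := MeasureTheory.volume) hab.le
  have hintR := (hcR.congr hright).intervalIntegrable_of_Icc (μ := MeasureTheory.volume) hbc.le
  have hIL : ∫ t in a..b, u'' t * hatFun a b c t = (u' b * (b - a) - u b + u a) / (b - a) := by
    rw [integral_congr (by rwa [uIcc_of_le hab.le]), integral_div,
      integral_mul_sub_eq_of_hasDerivWithinAt hab.le (fun t ht => (hu t (hL ht)).mono hL)
        (fun t ht => (hu' t (hL ht)).mono hL) (hu''.mono hL)]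
    ring
  have hIR : ∫ t in b..c, u'' t * hatFun a b c t = (u c + u' b * (b - c) - u b) / (c - b) := by
    rw [integral_congr (by rwa [uIcc_of_le hbc.le]), integral_div, integral_neg,
      integral_mul_sub_eq_of_hasDerivWithinAt hbc.le (fun t ht => (hu t (hR ht)).mono hR)
        (fun t ht => (hu' t (hR ht)).mono hR) (hu''.mono hR)]
    ring
  rw [← integral_add_adjacent_intervals hintL hintR, hIL, hIR]
  field_simp [sub_ne_zero.2 hab.ne', sub_ne_zero.2 hbc.ne']
  ring

end IntegrationByParts

theorem integral_mul_hatFun_of_mul_deriv2_eq_neg {β : ℝ} {f u u' u'' : ℝ → ℝ} {a b c : ℝ}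
    (hab : a < b) (hbc : b < c)
    (hu : ∀ t ∈ Icc a c, HasDerivWithinAt u (u' t) (Icc a c) t)
    (hu' : ∀ t ∈ Icc a c, HasDerivWithinAt u' (u'' t) (Icc a c) t)
    (hu'' : ContinuousOn u'' (Icc a c)) (hode : ∀ t ∈ Icc a c, β * u'' t = -f t) :
    ∫ t in a..c, f t * hatFun a b c t = β * ((u b - u a) / (b - a) - (u c - u b) / (c - b)) :=
  calc ∫ t in a..c, f t * hatFun a b c t
      = ∫ t in a..c, -β * (u'' t * hatFun a b c t) := by
        refine integral_congr fun t ht => ?_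
        rw [uIcc_of_le (hab.trans hbc).le] at ht
        linear_combination hatFun a b c t * hode t ht
    _ = β * ((u b - u a) / (b - a) - (u c - u b) / (c - b)) := by
        rw [integral_const_mul, integral_mul_hatFun hab hbc hu hu' hu'']
        ring

section DividedDifferences

variable {n : ℕ} {x e : ℕ → ℝ}

theorem eq_add_mul_sub_of_slope_eq {s : ℝ} (hx : ∀ i < n, x i ≠ x (i + 1))
    (hs : ∀ i < n, (e (i + 1) - e i) / (x (i + 1) - x i) = s) :
    ∀ i ≤ n, e i = e 0 + s * (x i - x 0) := by
  intro i hi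
  induction i with
  | zero => simp
  | succ i ih =>
    have hstep := hs i hi
    rw [div_eq_iff (sub_ne_zero.2 (hx i hi).symm)] at hstep
    linarith [ih (by omega)]

theorem eq_zero_of_slope_succ_eq (hx : ∀ i < n, x i < x (i + 1)) (h0 : e 0 = 0) (hn : e n = 0)
    (hslope : ∀ i, i + 2 ≤ n → (e (i + 2) - e (i + 1)) / (x (i + 2) - x (i + 1)) =
      (e (i + 1) - e i) / (x (i + 1) - x i)) :
    ∀ i ≤ n, e i = 0 := by
  set s := (e 1 - e 0) / (x 1 - x 0)
  have hconst : ∀ i < n, (e (i + 1) - e i) / (x (i + 1) - x i) = s := by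
    intro i hi
    induction i with
    | zero => rfl
    | succ i ih => rw [hslope i hi, ih (by omega)]
  have hlin := eq_add_mul_sub_of_slope_eq (fun i hi => (hx i hi).ne) hconst
  intro i hi
  rcases Nat.eq_zero_or_pos n with rfl | hpos
  · rw [Nat.le_zero.1 hi, h0]
  have hs0 : s = 0 := by
    have hxn : x 0 < x n :=
      strictMonoOn_Iic_of_lt_succ hx (mem_Iic.2 (Nat.zero_le _)) (mem_Iic.2 le_rfl) hpos
    have hen := hlin n le_rfl
    rw [hn, h0, zero_add] at hen
    exact (mul_eq_zero.1 hen.symm).resolve_right (sub_ne_zero.2 hxn.ne')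
  rw [hlin i hi, h0, hs0]
  ring

end DividedDifferences

theorem galerkin_nodal_exactness_general
    (n : ℕ) (x : ℕ → ℝ) (hx : ∀ i < n, x i < x (i + 1))
    (β : ℝ) (hβ : 0 < β) (f u u' u'' : ℝ → ℝ)
    (hu' : ∀ t ∈ Set.Icc (x 0) (x n), HasDerivWithinAt u (u' t) (Set.Icc (x 0) (x n)) t)
    (hu'' : ∀ t ∈ Set.Icc (x 0) (x n), HasDerivWithinAt u' (u'' t) (Set.Icc (x 0) (x n)) t)
    (hu''c : ContinuousOn u'' (Set.Icc (x 0) (x n)))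
    (hode : ∀ t ∈ Set.Icc (x 0) (x n), β * u'' t = -f t)
    (hu0 : u (x 0) = 0) (hun : u (x n) = 0)
    (c : ℕ → ℝ) (hc0 : c 0 = 0) (hcn : c n = 0)
    (hgal : ∀ i, 1 ≤ i → i ≤ n - 1 →
      β * ((c i - c (i - 1)) / (x i - x (i - 1)) - (c (i + 1) - c i) / (x (i + 1) - x i))
        = ∫ t in (x (i - 1))..(x (i + 1)), f t * hatFun (x (i - 1)) (x i) (x (i + 1)) t) :
    ∀ i ≤ n, c i = u (x i) := by
  have hmono : MonotoneOn x (Iic n) := (strictMonoOn_Iic_of_lt_succ hx).monotoneOn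
  have hexact : ∀ i, i + 2 ≤ n →
      ∫ t in x i..x (i + 2), f t * hatFun (x i) (x (i + 1)) (x (i + 2)) t
        = β * ((u (x (i + 1)) - u (x i)) / (x (i + 1) - x i)
          - (u (x (i + 2)) - u (x (i + 1))) / (x (i + 2) - x (i + 1))) := by
    intro i hi
    have hsub : Icc (x i) (x (i + 2)) ⊆ Icc (x 0) (x n) :=
      Icc_subset_Icc (hmono (Nat.zero_le n) (mem_Iic.2 (by omega)) (Nat.zero_le i))
        (hmono (mem_Iic.2 hi) (mem_Iic.2 le_rfl) hi)
    exact integral_mul_hatFun_of_mul_deriv2_eq_neg (hx i (by omega)) (hx (i + 1) (by omega))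
      (fun t ht => (hu' t (hsub ht)).mono hsub) (fun t ht => (hu'' t (hsub ht)).mono hsub)
      (hu''c.mono hsub) (fun t ht => hode t (hsub ht))
  have hslope : ∀ i, i + 2 ≤ n →
      (c (i + 2) - u (x (i + 2)) - (c (i + 1) - u (x (i + 1)))) / (x (i + 2) - x (i + 1))
        = (c (i + 1) - u (x (i + 1)) - (c i - u (x i))) / (x (i + 1) - x i) := by
    intro i hi
    have hg : β * _ = _ := (hgal (i + 1) (by omega) (by omega)).trans (hexact i hi)
    simp only [Nat.add_sub_cancel, add_assoc, Nat.reduceAdd] at hg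
    linear_combination -(mul_left_cancel₀ hβ.ne' hg)
  intro i hi
  exact sub_eq_zero.1 <| eq_zero_of_slope_succ_eq (e := fun i => c i - u (x i)) hx
    (by simp [hc0, hu0]) (by simp [hcn, hun]) hslope i hi

/-- **nodal exactness.**  For the constant-coefficient problem `β u'' = −f` with
homogeneous Dirichlet conditions, the nodal values `c i` of the `P₁` Galerkin finite element
solution coincide with the values `u (x i)` of the exact solution at the mesh nodes. -/
theorem galerkin_nodal_exactness
    (n : ℕ) (hn : 1 ≤ n) (x : ℕ → ℝ) (hx : ∀ i < n, x i < x (i + 1))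
    (β : ℝ) (hβ : 0 < β) (f u u' u'' : ℝ → ℝ)
    (hf : ContinuousOn f (Set.Icc (x 0) (x n)))
    (hu' : ∀ t ∈ Set.Icc (x 0) (x n), HasDerivWithinAt u (u' t) (Set.Icc (x 0) (x n)) t)
    (hu'' : ∀ t ∈ Set.Icc (x 0) (x n), HasDerivWithinAt u' (u'' t) (Set.Icc (x 0) (x n)) t)
    (hu''c : ContinuousOn u'' (Set.Icc (x 0) (x n)))
    (hode : ∀ t ∈ Set.Icc (x 0) (x n), β * u'' t = -f t)
    (hu0 : u (x 0) = 0) (hun : u (x n) = 0)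
    (c : ℕ → ℝ) (hc0 : c 0 = 0) (hcn : c n = 0)
    (hgal : ∀ i, 1 ≤ i → i ≤ n - 1 →
      β * ((c i - c (i - 1)) / (x i - x (i - 1)) - (c (i + 1) - c i) / (x (i + 1) - x i))
        = ∫ t in (x (i - 1))..(x (i + 1)), f t * hatFun (x (i - 1)) (x i) (x (i + 1)) t) :
    ∀ i ≤ n, c i = u (x i) :=
  galerkin_nodal_exactness_general n x hx β hβ f u u' u'' hu' hu'' hu''c hode hu0 hun c hc0 hcn hgal
end

section
/- Under the hypotheses of the preceding setup (partition x_0 < ... < x_n, constant β > 0, f continuously differentiable, u twice continuously differentiable with βu'' = −f, u(x_0) = u(x_n) = 0, nodal values c_i with c_0 = c_n = 0 solving the Galerkin equations with the hat functions, and u_h^{new} defined element-wise by u_h^{new}(x) = c_k·(x_{k+1}−x)/(x_{k+1}−x_k) + c_{k+1}·(x−x_k)/(x_{k+1}−x_k) − (1/(2β))(x−x_k)(x−x_{k+1})·f(x) on [x_k, x_{k+1}]), for every k and every x in the open interval (x_k, x_{k+1}), |u'(x) − (u_h^{new})'(x)| ≤ (7h^2/(24β)) · sup_{t∈[x_0,x_n]}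 |f'(t)|, where h = max_k (x_{k+1} − x_k). -/
/-! Integrating by parts against a hat function shows that, since `β u'' = -f`, the nodal values
of `u` satisfy the Galerkin equations. The nodal error `c i - u (x i)` then has equal difference
quotients on consecutive elements and vanishes at both ends, so it is zero: `c i = u (x i)`.

On an element `[a, b]` and for `a < t < b`, expand `u a` and `u b` to second order at `t`. Using
`f t = -β u'' t`, the correction term `-(r - a)(r - b) f r / (2β)` cancels the first-order error of
the linear interpolant, leaving
`u' t - (u_h^{new})' t = (R_a - R_b) / (b - a) - (t - a)(b - t) f' t / (2β)`.
As `u''` is `M/β`-Lipschitz with `M = sup |f'|`, the Taylor remainders satisfy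
`|R_s| ≤ M |s - t|³ / (6β)`, and the three terms add up to exactly `M (b - a)² / (6β)`. -/

open Set intervalIntegral

lemma forall_hasDerivWithinAt_mono {g g' : ℝ → ℝ} {s s' : Set ℝ}
    (hg : ∀ r ∈ s, HasDerivWithinAt g (g' r) s r) (hs' : s' ⊆ s) :
    ∀ r ∈ s', HasDerivWithinAt g (g' r) s' r :=
  fun r hr => (hg r (hs' hr)).mono hs'

lemma abs_le_of_abs_deriv_le_pow_right {g g' : ℝ → ℝ} {t b K : ℝ} {m : ℕ}
    (hg : ∀ r ∈ Icc t b, HasDerivWithinAt g (g' r) (Icc t b) r) (hg0 : g t = 0)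
    (hbound : ∀ r ∈ Icc t b, |g' r| ≤ K * (r - t) ^ m) :
    ∀ s ∈ Icc t b, |g s| ≤ K * (s - t) ^ (m + 1) / (m + 1) := by
  have hB : ∀ r, HasDerivAt (fun s => K * (s - t) ^ (m + 1) / (m + 1)) (K * (r - t) ^ m) r := by
    intro r
    refine ((((hasDerivAt_id' r).sub_const t).pow (m + 1)).const_mul K |>.div_const
      ((m : ℝ) + 1)).congr_deriv ?_
    rw [Nat.add_sub_cancel]
    push_cast
    field_simp
  exact image_norm_le_of_norm_deriv_right_le_deriv_boundary
    (fun r hr => (hg r hr).continuousWithinAt)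
    (fun r hr => (hg r (Ico_subset_Icc_self hr)).mono_of_mem_nhdsWithin (Icc_mem_nhdsGE_of_mem hr))
    (by simp [hg0]) hB (fun r hr => hbound r (Ico_subset_Icc_self hr))

lemma abs_le_of_abs_deriv_le_pow {g g' : ℝ → ℝ} {a b t K : ℝ} {m : ℕ} (ht : t ∈ Icc a b)
    (hg : ∀ r ∈ Icc a b, HasDerivWithinAt g (g' r) (Icc a b) r) (hg0 : g t = 0)
    (hbound : ∀ r ∈ Icc a b, |g' r| ≤ K * |r - t| ^ m) :
    ∀ s ∈ Icc a b, |g s| ≤ K * |s - t| ^ (m + 1) / (m + 1) := by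
  intro s hs
  rcases le_total t s with hts | hst
  · have hsub : Icc t b ⊆ Icc a b := Icc_subset_Icc_left ht.1
    rw [abs_of_nonneg (sub_nonneg.2 hts)]
    refine abs_le_of_abs_deriv_le_pow_right (forall_hasDerivWithinAt_mono hg hsub) hg0
      (fun r hr => ?_) s ⟨hts, hs.2⟩
    simpa [abs_of_nonneg (sub_nonneg.2 hr.1)] using hbound r (hsub hr)
  · have hsub : Icc a t ⊆ Icc a b := Icc_subset_Icc_right ht.2
    have hneg : MapsTo Neg.neg (Icc (-t) (-a)) (Icc a t) :=
      fun r hr => ⟨le_neg.1 hr.2, neg_le.1 hr.1⟩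
    have key := abs_le_of_abs_deriv_le_pow_right (g := fun r => g (-r)) (g' := fun r => -g' (-r))
      (t := -t) (b := -a) (K := K) (m := m)
      (fun r hr => by
        have := ((hg (-r) (hsub (hneg hr))).mono hsub).comp r
          (hasDerivWithinAt_neg r (Icc (-t) (-a))) hneg
        rwa [mul_neg_one] at this)
      (by simpa using hg0)
      (fun r hr => by
        have := hbound (-r) (hsub (hneg hr))
        have hdist : |-r - t| = r + t := by rw [abs_of_nonpos (by linarith [hr.1])]; ring
        rwa [abs_neg, sub_neg_eq_add, ← hdist])
      (-s) ⟨neg_le_neg hst, neg_le_neg hs.1⟩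
    rwa [neg_neg, neg_sub_neg, ← abs_of_nonneg (sub_nonneg.2 hst), abs_sub_comm] at key

lemma abs_taylor_two_remainder_le_s8 {u u' u'' : ℝ → ℝ} {a b t L : ℝ} (ht : t ∈ Icc a b)
    (hu' : ∀ r ∈ Icc a b, HasDerivWithinAt u (u' r) (Icc a b) r)
    (hu'' : ∀ r ∈ Icc a b, HasDerivWithinAt u' (u'' r) (Icc a b) r)
    (hL : ∀ r ∈ Icc a b, |u'' r - u'' t| ≤ L * |r - t|) :
    ∀ s ∈ Icc a b,
      |u s - u t - (s - t) * u' t - (s - t) ^ 2 / 2 * u'' t| ≤ L * |s - t| ^ 3 / 6 := by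
  have hfirst : ∀ s ∈ Icc a b, |u' s - u' t - (s - t) * u'' t| ≤ L / 2 * |s - t| ^ 2 := by
    intro s hs
    have := abs_le_of_abs_deriv_le_pow (g' := fun r => u'' r - u'' t) (m := 1) ht
      (fun r hr => (((hu'' r hr).sub_const (u' t)).sub
        (((hasDerivWithinAt_id r _).sub_const t).mul_const (u'' t))).congr_deriv (by simp))
      (by simp) (by simpa using hL) s hs
    norm_num at this
    rw [sq_abs]
    linarith
  intro s hs
  have := abs_le_of_abs_deriv_le_pow (g' := fun r => u' r - u' t - (r - t) * u'' t) (m := 2) ht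
    (fun r hr => ((((hu' r hr).sub_const (u t)).sub
      (((hasDerivWithinAt_id r _).sub_const t).mul_const (u' t))).sub
      (((((hasDerivWithinAt_id r _).sub_const t).pow 2).div_const 2).mul_const (u'' t))).congr_deriv
        (by simp))
    (by simp) hfirst s hs
  norm_num at this
  linarith

lemma hatFun_eq_of_mem_Icc_left {a c b r : ℝ} (hr : r ∈ Icc a c) :
    hatFun a c b r = (r - a) / (c - a) := by
  simp [hatFun, hr]

lemma hatFun_eq_of_mem_Icc_right {a c b r : ℝ} (hac : a < c) (hcb : c < b) (hr : r ∈ Icc c b) :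
    hatFun a c b r = (b - r) / (b - c) := by
  by_cases hrc : r ∈ Icc a c
  · obtain rfl : r = c := le_antisymm hrc.2 hr.1
    rw [hatFun_eq_of_mem_Icc_left hrc, div_self (sub_pos.2 hac).ne', div_self (sub_pos.2 hcb).ne']
  · simp [hatFun, hrc, hr]

lemma integral_deriv2_mul_sub_eq {u u' u'' : ℝ → ℝ} {a b p : ℝ} (hab : a ≤ b)
    (hu' : ∀ r ∈ Icc a b, HasDerivWithinAt u (u' r) (Icc a b) r)
    (hu'' : ∀ r ∈ Icc a b, HasDerivWithinAt u' (u'' r) (Icc a b) r)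
    (hu''c : ContinuousOn u'' (Icc a b)) :
    ∫ r in a..b, u'' r * (r - p) = (u' b * (b - p) - u b) - (u' a * (a - p) - u a) := by
  refine integral_eq_sub_of_hasDerivAt_of_le hab
    ((ContinuousOn.mul (fun r hr => (hu'' r hr).continuousWithinAt)
      (continuousOn_id.sub continuousOn_const)).sub fun r hr => (hu' r hr).continuousWithinAt)
    (fun r hr => ?_)
    ((hu''c.mul (continuousOn_id.sub continuousOn_const)).intervalIntegrable_of_Icc hab)
  have hnhds : Icc a b ∈ nhds r := Icc_mem_nhds hr.1 hr.2
  exact ((((hu'' r (Ioo_subset_Icc_self hr)).hasDerivAt hnhds).mul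
    ((hasDerivAt_id r).sub_const p)).sub
    ((hu' r (Ioo_subset_Icc_self hr)).hasDerivAt hnhds)).congr_deriv (by simp)

lemma integral_deriv2_mul_hatFun {u u' u'' : ℝ → ℝ} {a c b : ℝ} (hac : a < c) (hcb : c < b)
    (hu' : ∀ r ∈ Icc a b, HasDerivWithinAt u (u' r) (Icc a b) r)
    (hu'' : ∀ r ∈ Icc a b, HasDerivWithinAt u' (u'' r) (Icc a b) r)
    (hu''c : ContinuousOn u'' (Icc a b)) :
    ∫ r in a..b, u'' r * hatFun a c b r = (u b - u c) / (b - c) - (u c - u a) / (c - a) := by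
  have hleft : Icc a c ⊆ Icc a b := Icc_subset_Icc_right hcb.le
  have hright : Icc c b ⊆ Icc a b := Icc_subset_Icc_left hac.le
  have heq_left : EqOn (fun r => u'' r * hatFun a c b r)
      (fun r => (c - a)⁻¹ * (u'' r * (r - a))) (uIcc a c) := by
    intro r hr
    rw [uIcc_of_le hac.le] at hr
    simp only [hatFun_eq_of_mem_Icc_left hr]
    ring
  have heq_right : EqOn (fun r => u'' r * hatFun a c b r)
      (fun r => -(b - c)⁻¹ * (u'' r * (r - b))) (uIcc c b) := by
    intro r hr
    rw [uIcc_of_le hcb.le] at hr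
    simp only [hatFun_eq_of_mem_Icc_right hac hcb hr]
    ring
  have hint_left : IntervalIntegrable (fun r => u'' r * hatFun a c b r) MeasureTheory.volume a c :=
    (intervalIntegrable_congr (heq_left.mono uIoc_subset_uIcc)).2
      ((((hu''c.mono hleft).mul (continuousOn_id.sub continuousOn_const)).intervalIntegrable_of_Icc
        hac.le).const_mul _)
  have hint_right : IntervalIntegrable (fun r => u'' r * hatFun a c b r) MeasureTheory.volume c b :=
    (intervalIntegrable_congr (heq_right.mono uIoc_subset_uIcc)).2
      ((((hu''c.mono hright).mul (continuousOn_id.sub continuousOn_const)).intervalIntegrable_of_Icc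
        hcb.le).const_mul _)
  rw [← integral_add_adjacent_intervals hint_left hint_right, integral_congr heq_left,
    integral_congr heq_right, integral_const_mul, integral_const_mul,
    integral_deriv2_mul_sub_eq hac.le (forall_hasDerivWithinAt_mono hu' hleft)
      (forall_hasDerivWithinAt_mono hu'' hleft) (hu''c.mono hleft),
    integral_deriv2_mul_sub_eq hcb.le (forall_hasDerivWithinAt_mono hu' hright)
      (forall_hasDerivWithinAt_mono hu'' hright) (hu''c.mono hright)]
  field_simp [(sub_pos.2 hac).ne', (sub_pos.2 hcb).ne']
  ring

lemma eq_zero_of_consecutive_slopes_eq {n : ℕ} {x e : ℕ → ℝ} (hx : ∀ i < n, x i < x (i + 1))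
    (he0 : e 0 = 0) (hen : e n = 0)
    (hslope : ∀ i, i + 2 ≤ n → (e (i + 1) - e i) / (x (i + 1) - x i)
      = (e (i + 1 + 1) - e (i + 1)) / (x (i + 1 + 1) - x (i + 1))) :
    ∀ i ≤ n, e i = 0 := by
  set σ := (e 1 - e 0) / (x 1 - x 0)
  have hconst : ∀ i < n, (e (i + 1) - e i) / (x (i + 1) - x i) = σ := by
    intro i
    induction i with
    | zero => exact fun _ => rfl
    | succ i ih => exact fun hi => (hslope i (by omega)).symm.trans (ih (by omega))
  have hlin : ∀ i ≤ n, e i = σ * (x i - x 0) := by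
    intro i
    induction i with
    | zero => simp [he0]
    | succ i ih =>
      intro hi
      have := (div_eq_iff (sub_pos.2 (hx i hi)).ne').1 (hconst i hi)
      linarith [ih (by omega)]
  intro i hi
  rcases Nat.eq_zero_or_pos n with rfl | hn
  · rwa [Nat.le_zero.1 hi]
  have hx0n : x 0 < x n := strictMonoOn_Iic_of_lt_succ hx (by simp) (by simp) hn
  have hσ : σ = 0 := by
    have := hlin n le_rfl
    rw [hen] at this
    exact (mul_eq_zero.1 this.symm).resolve_right (sub_pos.2 hx0n).ne'
  rw [hlin i hi, hσ, zero_mul]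

theorem galerkin_eq_nodal_values {n : ℕ} {x c : ℕ → ℝ} {β : ℝ} {f u u' u'' : ℝ → ℝ}
    (hx : ∀ i < n, x i < x (i + 1)) (hβ : β ≠ 0)
    (hu' : ∀ t ∈ Icc (x 0) (x n), HasDerivWithinAt u (u' t) (Icc (x 0) (x n)) t)
    (hu'' : ∀ t ∈ Icc (x 0) (x n), HasDerivWithinAt u' (u'' t) (Icc (x 0) (x n)) t)
    (hu''c : ContinuousOn u'' (Icc (x 0) (x n)))
    (hode : ∀ t ∈ Icc (x 0) (x n), β * u'' t = -f t)
    (hu0 : u (x 0) = 0) (hun : u (x n) = 0) (hc0 : c 0 = 0) (hcn : c n = 0)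
    (hgal : ∀ i, 1 ≤ i → i ≤ n - 1 →
      β * ((c i - c (i - 1)) / (x i - x (i - 1)) - (c (i + 1) - c i) / (x (i + 1) - x i))
        = ∫ t in (x (i - 1))..(x (i + 1)), f t * hatFun (x (i - 1)) (x i) (x (i + 1)) t) :
    ∀ i ≤ n, c i = u (x i) := by
  have hmono : MonotoneOn x (Iic n) := (strictMonoOn_Iic_of_lt_succ hx).monotoneOn
  have hexact : ∀ i, i + 2 ≤ n →
      ∫ t in (x i)..(x (i + 1 + 1)), f t * hatFun (x i) (x (i + 1)) (x (i + 1 + 1)) t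
        = β * ((u (x (i + 1)) - u (x i)) / (x (i + 1) - x i)
          - (u (x (i + 1 + 1)) - u (x (i + 1))) / (x (i + 1 + 1) - x (i + 1))) := by
    intro i hi
    have hsub : Icc (x i) (x (i + 1 + 1)) ⊆ Icc (x 0) (x n) :=
      Icc_subset_Icc (hmono (by simp) (by simp; omega) (by omega))
        (hmono (by simp; omega) (by simp) hi)
    have hf : EqOn (fun t => f t * hatFun (x i) (x (i + 1)) (x (i + 1 + 1)) t)
        (fun t => -β * (u'' t * hatFun (x i) (x (i + 1)) (x (i + 1 + 1)) t))
        (uIcc (x i) (x (i + 1 + 1))) := by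
      intro t ht
      rw [uIcc_of_le ((hx i (by omega)).trans (hx (i + 1) (by omega))).le] at ht
      have hft : f t = -(β * u'' t) := by linarith [hode t (hsub ht)]
      simp only [hft]
      ring
    rw [integral_congr hf, integral_const_mul,
      integral_deriv2_mul_hatFun (hx i (by omega)) (hx (i + 1) (by omega))
        (forall_hasDerivWithinAt_mono hu' hsub) (forall_hasDerivWithinAt_mono hu'' hsub)
        (hu''c.mono hsub)]
    ring
  have herr := eq_zero_of_consecutive_slopes_eq (e := fun i => c i - u (x i)) hx
    (by simp [hc0, hu0]) (by simp [hcn, hun]) (fun i hi => by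
      have h := mul_left_cancel₀ hβ ((hgal (i + 1) (by omega) (by omega)).trans (hexact i hi))
      simp only [Nat.add_sub_cancel, sub_div] at h ⊢
      linarith)
  exact fun i hi => sub_eq_zero.1 (herr i hi)

noncomputable def correctedInterpolant (a b ya yb β : ℝ) (f : ℝ → ℝ) (r : ℝ) : ℝ :=
  ya * (b - r) / (b - a) + yb * (r - a) / (b - a) - 1 / (2 * β) * (r - a) * (r - b) * f r

lemma hasDerivAt_correctedInterpolant {a b ya yb β t d : ℝ} {f : ℝ → ℝ} (hf : HasDerivAt f d t) :
    HasDerivAt (correctedInterpolant a b ya yb β f)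
      ((yb - ya) / (b - a) - 1 / (2 * β) * ((2 * t - a - b) * f t + (t - a) * (t - b) * d)) t := by
  have hlin := ((((hasDerivAt_id' t).const_sub b).const_mul ya).div_const (b - a)).add
    ((((hasDerivAt_id' t).sub_const a).const_mul yb).div_const (b - a))
  have hbubble := ((((hasDerivAt_id' t).sub_const a).const_mul (1 / (2 * β))).mul
    ((hasDerivAt_id' t).sub_const b)).mul hf
  exact (hlin.sub hbubble).congr_deriv (by simp only [Pi.mul_apply]; ring)

lemma abs_deriv_sub_deriv_correctedInterpolant_le {a b t β M : ℝ} {f f' u u' u'' : ℝ → ℝ}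
    (hβ : 0 < β) (ht : t ∈ Ioo a b)
    (hu' : ∀ r ∈ Icc a b, HasDerivWithinAt u (u' r) (Icc a b) r)
    (hu'' : ∀ r ∈ Icc a b, HasDerivWithinAt u' (u'' r) (Icc a b) r)
    (hf' : ∀ r ∈ Icc a b, HasDerivWithinAt f (f' r) (Icc a b) r)
    (hM : ∀ r ∈ Icc a b, |f' r| ≤ M) (hode : ∀ r ∈ Icc a b, β * u'' r = -f r) :
    |u' t - deriv (correctedInterpolant a b (u a) (u b) β f) t| ≤ M * (b - a) ^ 2 / (6 * β) := by
  have htab : t ∈ Icc a b := Ioo_subset_Icc_self ht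
  have hta : 0 < t - a := sub_pos.2 ht.1
  have hbt : 0 < b - t := sub_pos.2 ht.2
  have hba : 0 < b - a := by linarith
  have hlip : ∀ r ∈ Icc a b, |u'' r - u'' t| ≤ M / β * |r - t| := by
    intro r hr
    have hf := (convex_Icc a b).norm_image_sub_le_of_norm_hasDerivWithin_le hf' hM htab hr
    have hu''f : u'' r - u'' t = -(f r - f t) / β := by
      field_simp
      linarith [hode r hr, hode t htab]
    rw [hu''f, abs_div, abs_neg, abs_of_pos hβ, div_mul_eq_mul_div]
    exact div_le_div_of_nonneg_right hf hβ.le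
  have hR := abs_taylor_two_remainder_le_s8 htab hu' hu'' hlip
  set RB := u b - u t - (b - t) * u' t - (b - t) ^ 2 / 2 * u'' t
  set RA := u a - u t - (a - t) * u' t - (a - t) ^ 2 / 2 * u'' t
  have hRB : |RB| ≤ M / β * (b - t) ^ 3 / 6 := by
    simpa [abs_of_pos hbt] using hR b ⟨ht.1.le.trans ht.2.le, le_rfl⟩
  have hRA : |RA| ≤ M / β * (t - a) ^ 3 / 6 := by
    simpa [abs_sub_comm a t, abs_of_pos hta] using hR a ⟨le_rfl, ht.1.le.trans ht.2.le⟩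
  have hft : f t = -(β * u'' t) := by linarith [hode t htab]
  have hsplit : u' t - ((u b - u a) / (b - a)
      - 1 / (2 * β) * ((2 * t - a - b) * f t + (t - a) * (t - b) * f' t))
      = (RA - RB) / (b - a) - (t - a) * (b - t) * f' t / (2 * β) := by
    rw [hft]
    field_simp
    simp only [RA, RB]
    ring
  rw [(hasDerivAt_correctedInterpolant ((hf' t htab).hasDerivAt (Icc_mem_nhds ht.1 ht.2))).deriv,
    hsplit]
  have hfirst : |(RA - RB) / (b - a)| ≤ (|RA| + |RB|) / (b - a) := by
    rw [abs_div, abs_of_pos hba]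
    exact div_le_div_of_nonneg_right (abs_sub _ _) hba.le
  have hsecond : |(t - a) * (b - t) * f' t / (2 * β)| ≤ (t - a) * (b - t) * M / (2 * β) := by
    have h2β : 0 < 2 * β := by linarith
    rw [abs_div, abs_mul, abs_of_pos (mul_pos hta hbt), abs_of_pos h2β]
    exact div_le_div_of_nonneg_right (mul_le_mul_of_nonneg_left (hM t htab) (mul_pos hta hbt).le)
      h2β.le
  calc _ ≤ (|RA| + |RB|) / (b - a) + (t - a) * (b - t) * M / (2 * β) :=
        (abs_sub _ _).trans (add_le_add hfirst hsecond)
    _ ≤ (M / β * (t - a) ^ 3 / 6 + M / β * (b - t) ^ 3 / 6) / (b - a)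
        + (t - a) * (b - t) * M / (2 * β) := by gcongr
    _ = M * (b - a) ^ 2 / (6 * β) := by
        field_simp
        ring

lemma abs_le_iSup_of_continuousOn {α : Type*} [TopologicalSpace α] {g : α → ℝ} {s : Set α}
    (hs : IsCompact s) (hg : ContinuousOn g s) : ∀ r ∈ s, |g r| ≤ ⨆ y : s, |g y| := fun r hr =>
  le_ciSup (f := fun y : s => |g y|)
    (image_eq_range (fun y => |g y|) s ▸ hs.bddAbove_image hg.abs)
    ⟨r, hr⟩

/-- The derivative of the posterior-corrected `P₁` finite element solution
`u_h^{new}` satisfies the second-order (H¹/energy norm) bound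
`|u' x − (u_h^{new})' x| ≤ (7h²/(24β)) sup |f'|` in the interior of each element,
where `h` is the mesh size. -/
theorem posterior_corrected_fem_second_order_derivative
    (n : ℕ) (hn : 1 ≤ n) (x : ℕ → ℝ) (hx : ∀ i < n, x i < x (i + 1))
    (β : ℝ) (hβ : 0 < β) (f f' u u' u'' : ℝ → ℝ)
    (hf' : ∀ t ∈ Set.Icc (x 0) (x n), HasDerivWithinAt f (f' t) (Set.Icc (x 0) (x n)) t)
    (hf'c : ContinuousOn f' (Set.Icc (x 0) (x n)))
    (hu' : ∀ t ∈ Set.Icc (x 0) (x n), HasDerivWithinAt u (u' t) (Set.Icc (x 0) (x n)) t)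
    (hu'' : ∀ t ∈ Set.Icc (x 0) (x n), HasDerivWithinAt u' (u'' t) (Set.Icc (x 0) (x n)) t)
    (hu''c : ContinuousOn u'' (Set.Icc (x 0) (x n)))
    (hode : ∀ t ∈ Set.Icc (x 0) (x n), β * u'' t = -f t)
    (hu0 : u (x 0) = 0) (hun : u (x n) = 0)
    (c : ℕ → ℝ) (hc0 : c 0 = 0) (hcn : c n = 0)
    (hgal : ∀ i, 1 ≤ i → i ≤ n - 1 →
      β * ((c i - c (i - 1)) / (x i - x (i - 1)) - (c (i + 1) - c i) / (x (i + 1) - x i))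
        = ∫ t in (x (i - 1))..(x (i + 1)), f t * hatFun (x (i - 1)) (x i) (x (i + 1)) t)
    (uhnew : ℝ → ℝ)
    (huh : ∀ k < n, ∀ t ∈ Set.Icc (x k) (x (k + 1)),
      uhnew t = c k * (x (k + 1) - t) / (x (k + 1) - x k)
        + c (k + 1) * (t - x k) / (x (k + 1) - x k)
        - 1 / (2 * β) * (t - x k) * (t - x (k + 1)) * f t)
    (H : ℝ)
    (hH : H = (Finset.range n).sup' (Finset.nonempty_range_iff.mpr (by omega))
      (fun k => x (k + 1) - x k)) :
    ∀ k < n, ∀ t ∈ Set.Ioo (x k) (x (k + 1)),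
      |u' t - deriv uhnew t| ≤ 7 * H ^ 2 / (24 * β) * ⨆ s : Set.Icc (x 0) (x n), |f' s| := by
  intro k hk t ht
  have hnodal := galerkin_eq_nodal_values hx hβ.ne' hu' hu'' hu''c hode hu0 hun hc0 hcn hgal
  have hM := abs_le_iSup_of_continuousOn isCompact_Icc hf'c
  set M := ⨆ s : Set.Icc (x 0) (x n), |f' s|
  have hmono : MonotoneOn x (Iic n) := (strictMonoOn_Iic_of_lt_succ hx).monotoneOn
  have hsub : Icc (x k) (x (k + 1)) ⊆ Icc (x 0) (x n) :=
    Icc_subset_Icc (hmono (by simp) (by simp; omega) (by omega))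
      (hmono (by simp; omega) (by simp) hk)
  have hloc : uhnew =ᶠ[nhds t]
      correctedInterpolant (x k) (x (k + 1)) (u (x k)) (u (x (k + 1))) β f :=
    Filter.eventuallyEq_of_mem (isOpen_Ioo.mem_nhds ht) fun r hr => by
      rw [huh k hk r (Ioo_subset_Icc_self hr), hnodal k hk.le, hnodal (k + 1) hk]
      rfl
  have hmesh : x (k + 1) - x k ≤ H :=
    hH ▸ Finset.le_sup' (fun k => x (k + 1) - x k) (Finset.mem_range.2 hk)
  have hM0 : 0 ≤ M := (abs_nonneg _).trans (hM t (hsub (Ioo_subset_Icc_self ht)))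
  rw [hloc.deriv_eq]
  calc _ ≤ M * (x (k + 1) - x k) ^ 2 / (6 * β) :=
        abs_deriv_sub_deriv_correctedInterpolant_le hβ ht (forall_hasDerivWithinAt_mono hu' hsub)
          (forall_hasDerivWithinAt_mono hu'' hsub) (forall_hasDerivWithinAt_mono hf' hsub)
          (fun r hr => hM r (hsub hr)) (fun r hr => hode r (hsub hr))
    _ ≤ M * H ^ 2 / (6 * β) := by gcongr; linarith [hx k hk]
    _ ≤ 7 * H ^ 2 / (24 * β) * M := by
        rw [show 7 * H ^ 2 / (24 * β) * M = M * H ^ 2 / (6 * β) + M * H ^ 2 / (8 * β) by ring]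
        have : 0 ≤ M * H ^ 2 / (8 * β) := by positivity
        linarith
end

section
/- Let a < b, let β be continuously differentiable on [a,b] with β(x) ≥ β_0 > 0 for all x, let q and f be continuous on [a,b], and let u be twice continuously differentiable on [a,b] satisfying β(x)·u''(x) + β'(x)·u'(x) − q(x)·u(x) + f(x) = 0 for all x in [a,b]. Then for every x in [a,b], |u''(x) + (β'(x)/β(x))·(u(b)−u(a))/(b−a) − (q(x)/β(x))·u_I(x) + f(x)/β(x)| ≤ (sup_{[a,b]}|β'| / β_0)·(b−a)·sup_{[a,b]}|u''| + (sup_{[a,b]}|q| / β_0)·((b−a)^2/8)·sup_{[a,b]}|u''|, where u_I is the linear interpolant of u on [a,b]. -/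
/-!
Along the equation, the residual equals `(β'/β)(u_I' - u') + (q/β)(u - u_I)`. By the mean value
theorem `u_I'` is a value of `u'`, so the first error is at most `(b - a) sup|u''|`. The
interpolation error `e = u - u_I` vanishes at `a` and `b` with `e'' = u''`, so
`±e - M (x - a)(b - x)/2` is convex for `M = sup|u''|`, hence nonpositive, which gives
`|e x| ≤ M (x - a)(b - x)/2 ≤ M (b - a)²/8`.
-/

open Set

noncomputable def linearInterp (a b : ℝ) (u : ℝ → ℝ) (x : ℝ) : ℝ :=
  u a * (b - x) / (b - a) + u b * (x - a) / (b - a)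

lemma linearInterp_left {a b : ℝ} (hab : a ≠ b) (u : ℝ → ℝ) :
    linearInterp a b u a = u a := by
  simp [linearInterp, sub_ne_zero.2 hab.symm]

lemma linearInterp_right {a b : ℝ} (hab : a ≠ b) (u : ℝ → ℝ) :
    linearInterp a b u b = u b := by
  simp [linearInterp, sub_ne_zero.2 hab.symm]

lemma hasDerivAt_linearInterp (a b : ℝ) (u : ℝ → ℝ) (x : ℝ) :
    HasDerivAt (linearInterp a b u) ((u b - u a) / (b - a)) x := by
  have h := ((((hasDerivAt_id x).const_sub b).const_mul (u a)).div_const (b - a)).add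
    ((((hasDerivAt_id x).sub_const a).const_mul (u b)).div_const (b - a))
  exact h.congr_deriv (by ring)

lemma abs_le_ciSup_abs_of_continuousOn {X : Type*} [TopologicalSpace X] {s : Set X}
    (hs : IsCompact s) {g : X → ℝ} (hg : ContinuousOn g s) {t : X} (ht : t ∈ s) :
    |g t| ≤ ⨆ y : s, |g y| := by
  have hbdd := (hs.image_of_continuousOn hg.abs).bddAbove
  rw [image_eq_range] at hbdd
  exact le_ciSup hbdd ⟨t, ht⟩

lemma ConvexOn.nonpos_of_mem_Icc {a b x : ℝ} {φ : ℝ → ℝ} (hφ : ConvexOn ℝ (Icc a b) φ)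
    (ha : φ a ≤ 0) (hb : φ b ≤ 0) (hx : x ∈ Icc a b) : φ x ≤ 0 := by
  have hab : a ≤ b := hx.1.trans hx.2
  refine (hφ.le_on_segment (left_mem_Icc.2 hab) (right_mem_Icc.2 hab) ?_).trans (max_le ha hb)
  rwa [segment_eq_Icc hab]

lemma le_of_neg_le_deriv2 {a b M x : ℝ} {g g' g'' : ℝ → ℝ} (hg : ContinuousOn g (Icc a b))
    (hg' : ∀ t ∈ Ioo a b, HasDerivAt g (g' t) t)
    (hg'' : ∀ t ∈ Ioo a b, HasDerivAt g' (g'' t) t)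
    (hM : ∀ t ∈ Ioo a b, -M ≤ g'' t) (ha : g a ≤ 0) (hb : g b ≤ 0) (hx : x ∈ Icc a b) :
    g x ≤ M * ((x - a) * (b - x)) / 2 := by
  have hw' : ∀ t, HasDerivAt (fun s => M * ((s - a) * (b - s)) / 2) (M * (a + b - 2 * t) / 2) t :=
    fun t => ((((hasDerivAt_id' t).sub_const a).mul ((hasDerivAt_id' t).const_sub b)).const_mul
      M |>.div_const 2).congr_deriv (by ring)
  have hw'' : ∀ t, HasDerivAt (fun s => M * (a + b - 2 * s) / 2) (-M) t :=
    fun t => ((((hasDerivAt_id' t).const_mul 2).const_sub (a + b)).const_mul M |>.div_const 2)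
      |>.congr_deriv (by ring)
  have hconvex : ConvexOn ℝ (Icc a b) (fun s => g s - M * ((s - a) * (b - s)) / 2) := by
    refine convexOn_of_hasDerivWithinAt2_nonneg (convex_Icc a b)
      (hg.sub (by fun_prop)) (fun t ht => ?_) (fun t ht => ?_) (fun t ht => ?_)
      (f' := fun s => g' s - M * (a + b - 2 * s) / 2) (f'' := fun s => g'' s + M)
    all_goals rw [interior_Icc] at ht
    · exact ((hg' t ht).sub (hw' t)).hasDerivWithinAt
    · exact ((hg'' t ht).sub (hw'' t)).hasDerivWithinAt.congr_deriv (by ring)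
    · linarith [hM t ht]
  have hx_nonpos := hconvex.nonpos_of_mem_Icc (by simpa using ha) (by simpa using hb) hx
  linarith

lemma abs_le_of_abs_deriv2_le {a b M x : ℝ} {g g' g'' : ℝ → ℝ}
    (hg : ContinuousOn g (Icc a b))
    (hg' : ∀ t ∈ Ioo a b, HasDerivAt g (g' t) t)
    (hg'' : ∀ t ∈ Ioo a b, HasDerivAt g' (g'' t) t)
    (hM : ∀ t ∈ Ioo a b, |g'' t| ≤ M) (ha : g a = 0) (hb : g b = 0) (hx : x ∈ Icc a b) :
    |g x| ≤ M * ((x - a) * (b - x)) / 2 := by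
  refine abs_le.2 ⟨?_, le_of_neg_le_deriv2 hg hg' hg'' (fun t ht => (abs_le.1 (hM t ht)).1)
    ha.le hb.le hx⟩
  have hneg := le_of_neg_le_deriv2 hg.neg (fun t ht => (hg' t ht).neg) (fun t ht => (hg'' t ht).neg)
    (fun t ht => neg_le_neg (abs_le.1 (hM t ht)).2) (by simp [ha]) (by simp [hb]) hx
  simp only [Pi.neg_apply] at hneg
  linarith

section

variable {a b M x : ℝ} {u u' u'' : ℝ → ℝ}

lemma abs_sub_slope_le (hab : a < b)
    (hu' : ∀ t ∈ Icc a b, HasDerivWithinAt u (u' t) (Icc a b) t)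
    (hu'' : ∀ t ∈ Icc a b, HasDerivWithinAt u' (u'' t) (Icc a b) t)
    (hM : ∀ t ∈ Icc a b, |u'' t| ≤ M) (hx : x ∈ Icc a b) :
    |u' x - (u b - u a) / (b - a)| ≤ M * (b - a) := by
  obtain ⟨ξ, hξ, hslope⟩ := exists_hasDerivAt_eq_slope u u' hab
    (fun t ht => (hu' t ht).continuousWithinAt)
    (fun t ht => (hu' t (Ioo_subset_Icc_self ht)).hasDerivAt (Icc_mem_nhds ht.1 ht.2))
  have hξ' : ξ ∈ Icc a b := Ioo_subset_Icc_self hξ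
  have hdist : |x - ξ| ≤ b - a := abs_sub_le_of_le_of_le hx.1 hx.2 hξ'.1 hξ'.2
  calc |u' x - (u b - u a) / (b - a)| = ‖u' x - u' ξ‖ := by rw [← hslope]; rfl
    _ ≤ M * ‖x - ξ‖ :=
      (convex_Icc a b).norm_image_sub_le_of_norm_hasDerivWithin_le hu'' hM hξ' hx
    _ ≤ M * (b - a) := mul_le_mul_of_nonneg_left hdist ((abs_nonneg _).trans (hM x hx))

lemma abs_sub_linearInterp_le (hab : a < b)
    (hu' : ∀ t ∈ Icc a b, HasDerivWithinAt u (u' t) (Icc a b) t)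
    (hu'' : ∀ t ∈ Icc a b, HasDerivWithinAt u' (u'' t) (Icc a b) t)
    (hM : ∀ t ∈ Icc a b, |u'' t| ≤ M) (hx : x ∈ Icc a b) :
    |u x - linearInterp a b u x| ≤ M * ((b - a) ^ 2 / 8) := by
  have hinterior : ∀ {v v' : ℝ → ℝ},
      (∀ t ∈ Icc a b, HasDerivWithinAt v (v' t) (Icc a b) t) →
      ∀ t ∈ Ioo a b, HasDerivAt v (v' t) t :=
    fun hv t ht => (hv t (Ioo_subset_Icc_self ht)).hasDerivAt (Icc_mem_nhds ht.1 ht.2)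
  have herr := abs_le_of_abs_deriv2_le (g := fun t => u t - linearInterp a b u t)
    (fun t ht => (hu' t ht).continuousWithinAt.sub
      (hasDerivAt_linearInterp a b u t).continuousAt.continuousWithinAt)
    (fun t ht => (hinterior hu' t ht).sub (hasDerivAt_linearInterp a b u t))
    (fun t ht => (hinterior hu'' t ht).sub_const _)
    (fun t ht => hM t (Ioo_subset_Icc_self ht))
    (by simp [linearInterp_left hab.ne]) (by simp [linearInterp_right hab.ne]) hx
  have hM0 : 0 ≤ M := (abs_nonneg _).trans (hM x hx)
  have hprod : (x - a) * (b - x) ≤ (b - a) ^ 2 / 4 := by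
    nlinarith [sq_nonneg ((b - x) - (x - a))]
  calc |u x - linearInterp a b u x| ≤ M * ((x - a) * (b - x)) / 2 := herr
    _ ≤ M * ((b - a) ^ 2 / 4) / 2 := by gcongr
    _ = M * ((b - a) ^ 2 / 8) := by ring

end

theorem second_derivative_replacement_first_order_general
    (a b β₀ : ℝ) (hab : a < b) (hβ₀ : 0 < β₀)
    (β β' q f u u' u'' : ℝ → ℝ)
    (hβ'c : ContinuousOn β' (Set.Icc a b))
    (hβlb : ∀ x ∈ Set.Icc a b, β₀ ≤ β x)
    (hq : ContinuousOn q (Set.Icc a b))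
    (hu' : ∀ x ∈ Set.Icc a b, HasDerivWithinAt u (u' x) (Set.Icc a b) x)
    (hu'' : ∀ x ∈ Set.Icc a b, HasDerivWithinAt u' (u'' x) (Set.Icc a b) x)
    (hu''c : ContinuousOn u'' (Set.Icc a b))
    (hode : ∀ x ∈ Set.Icc a b, β x * u'' x + β' x * u' x - q x * u x + f x = 0) :
    ∀ x ∈ Set.Icc a b,
      |u'' x + β' x / β x * ((u b - u a) / (b - a))
          - q x / β x * (u a * (b - x) / (b - a) + u b * (x - a) / (b - a))
          + f x / β x|
        ≤ (⨆ t : Set.Icc a b, |β' t|) / β₀ * (b - a) * (⨆ t : Set.Icc a b, |u'' t|)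
          + (⨆ t : Set.Icc a b, |q t|) / β₀ * ((b - a) ^ 2 / 8)
            * (⨆ t : Set.Icc a b, |u'' t|) := by
  intro x hx
  have hβx : 0 < β x := hβ₀.trans_le (hβlb x hx)
  have hM := fun t (ht : t ∈ Icc a b) => abs_le_ciSup_abs_of_continuousOn isCompact_Icc hu''c ht
  have hslope := abs_sub_slope_le hab hu' hu'' hM hx
  have hinterp := abs_sub_linearInterp_le hab hu' hu'' hM hx
  have hcoeff : ∀ c : ℝ → ℝ, ContinuousOn c (Icc a b) →
      |c x / β x| ≤ (⨆ t : Icc a b, |c t|) / β₀ := fun c hc => by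
    have hcx := abs_le_ciSup_abs_of_continuousOn isCompact_Icc hc hx
    rw [abs_div, abs_of_pos hβx]
    exact div_le_div₀ ((abs_nonneg _).trans hcx) hcx hβ₀ (hβlb x hx)
  have hresidual : u'' x + β' x / β x * ((u b - u a) / (b - a))
        - q x / β x * linearInterp a b u x + f x / β x
      = β' x / β x * -(u' x - (u b - u a) / (b - a))
        + q x / β x * (u x - linearInterp a b u x) := by
    field_simp
    linear_combination hode x hx
  change |_ - q x / β x * linearInterp a b u x + _| ≤ _
  rw [hresidual]
  have hβ'x := hcoeff β' hβ'c
  have hqx := hcoeff q hq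
  calc _ ≤ |β' x / β x| * |u' x - (u b - u a) / (b - a)|
        + |q x / β x| * |u x - linearInterp a b u x| :=
        (abs_add_le _ _).trans_eq (by rw [abs_mul, abs_mul, abs_neg])
    _ ≤ (⨆ t : Icc a b, |β' t|) / β₀ * ((⨆ t : Icc a b, |u'' t|) * (b - a))
        + (⨆ t : Icc a b, |q t|) / β₀ * ((⨆ t : Icc a b, |u'' t|) * ((b - a) ^ 2 / 8)) :=
        add_le_add (mul_le_mul hβ'x hslope (abs_nonneg _) ((abs_nonneg _).trans hβ'x))
          (mul_le_mul hqx hinterp (abs_nonneg _) ((abs_nonneg _).trans hqx))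
    _ = _ := by ring

/-- For the Sturm–Liouville equation `β u'' + β' u' − q u + f = 0` on `[a,b]`
with `β ≥ β₀ > 0`, replacing `u'` by the constant derivative `(u b − u a)/(b−a)` of the
linear interpolant and `u` by the linear interpolant `u_I` in
`u'' = −(β'/β) u' + (q/β) u − f/β` incurs an error bounded by
`(sup|β'|/β₀)(b−a) sup|u''| + (sup|q|/β₀)((b−a)²/8) sup|u''|`. -/
theorem second_derivative_replacement_first_order
    (a b β₀ : ℝ) (hab : a < b) (hβ₀ : 0 < β₀)
    (β β' q f u u' u'' : ℝ → ℝ)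
    (hβd : ∀ x ∈ Set.Icc a b, HasDerivWithinAt β (β' x) (Set.Icc a b) x)
    (hβ'c : ContinuousOn β' (Set.Icc a b))
    (hβlb : ∀ x ∈ Set.Icc a b, β₀ ≤ β x)
    (hq : ContinuousOn q (Set.Icc a b))
    (hf : ContinuousOn f (Set.Icc a b))
    (hu' : ∀ x ∈ Set.Icc a b, HasDerivWithinAt u (u' x) (Set.Icc a b) x)
    (hu'' : ∀ x ∈ Set.Icc a b, HasDerivWithinAt u' (u'' x) (Set.Icc a b) x)
    (hu''c : ContinuousOn u'' (Set.Icc a b))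
    (hode : ∀ x ∈ Set.Icc a b, β x * u'' x + β' x * u' x - q x * u x + f x = 0) :
    ∀ x ∈ Set.Icc a b,
      |u'' x + β' x / β x * ((u b - u a) / (b - a))
          - q x / β x * (u a * (b - x) / (b - a) + u b * (x - a) / (b - a))
          + f x / β x|
        ≤ (⨆ t : Set.Icc a b, |β' t|) / β₀ * (b - a) * (⨆ t : Set.Icc a b, |u'' t|)
          + (⨆ t : Set.Icc a b, |q t|) / β₀ * ((b - a) ^ 2 / 8)
            * (⨆ t : Set.Icc a b, |u'' t|) :=
  second_derivative_replacement_first_order_general a b β₀ hab hβ₀ β β' q f u u' u'' hβ'c hβlb hq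
    hu' hu'' hu''c hode
end
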